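/- arXiv:1507.06939 — 4 statements merged into one kernel-verified Lean document; each statement's English description precedes it below -/
import Mathlib

section
/- For words η, ξ over the alphabet X = {x0, x1} and measurable locally bounded input functions u = {u0, u1} on [0, T], the iterated integrals satisfy E_η[u](t) · E_ξ[u](t) = E_{η ⧢ ξ}[u](t) for all t ∈ [0, T], where E is extended linearly from words to polynomials in words. -/
open scoped TensorProduct

noncomputable section

namespace Paper

/-- Words over the alphabet `X = {x0, x1}`, encoded as lists over `Fin 2`
(`0` stands for the letter `x0` and `1` for the letter `x1`). -/
abbrev Word : Type := List (Fin 2)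

/-- Formal power series `ℝ⟨⟨X⟩⟩`, given by their coefficient functions `η ↦ ⟨c,η⟩`. -/
abbrev Series : Type := Word → ℝ

/-- The left shift `x_i⁻¹(c)`. -/
def lshift (i : Fin 2) (c : Series) : Series := fun w => c (i :: w)

/-- Left concatenation `x_i c` of the letter `x_i` onto every word of `c`. -/
def lconcat (i : Fin 2) (c : Series) : Series := fun w =>
  match w with
  | [] => 0
  | j :: v => if j = i then c v else 0

/-- Right concatenation `p x_i` of the letter `x_i` onto every word of `p`. -/
def rconcat {R : Type*} [Zero R] (i : Fin 2) (p : Word → R) : Word → R := fun w =>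
  if w.getLast? = some i then p w.dropLast else 0

/-- The series of a single word. -/
def ind (η : Word) : Series := fun w => if w = η then 1 else 0

/-- The empty word as a series, the unit `∅` (often written `1`). -/
def one : Series := ind []

/-- The shuffle product, defined coefficientwise by the recursion
`⟨c ⧢ d, ∅⟩ = ⟨c,∅⟩⟨d,∅⟩` and `⟨c ⧢ d, x_i w⟩ = ⟨x_i⁻¹(c) ⧢ d, w⟩ + ⟨c ⧢ x_i⁻¹(d), w⟩`,
which is the bilinear (and ultrametrically continuous) extension of the recursive
shuffle product of words. -/
def shuffleFn : Series → Series → Word → ℝ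
  | c, d, [] => c [] * d []
  | c, d, i :: w => shuffleFn (lshift i c) d w + shuffleFn c (lshift i d) w

/-- The shuffle product on `ℝ⟨⟨X⟩⟩`. -/
def sh (c d : Series) : Series := shuffleFn c d

/-- The map `φ_d(x_i)` for the modified composition product:
`φ_d(x0)(e) = x0 e` and `φ_d(x1)(e) = x1 e + x0 (d ⧢ e)`. -/
def phiLetter (d : Series) (i : Fin 2) (e : Series) : Series :=
  if i = 0 then lconcat 0 e else lconcat 1 e + lconcat 0 (sh d e)

/-- `φ_d(η)`, the algebra-homomorphism extension determined by
`φ_d(x_i η) = φ_d(x_i) ∘ φ_d(η)` and `φ_d(∅) = id`. -/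
def phi (d : Series) : Word → Series → Series
  | [], e => e
  | i :: η, e => phiLetter d i (phi d η e)

/-- The modified composition product `c ∘̃ d = Σ_η ⟨c,η⟩ φ_d(η)(1)`. -/
def mcomp (c d : Series) : Series := fun w => ∑' η : Word, c η * phi d η one w

/-- The map `ψ_d(x_i)` for the composition product:
`ψ_d(x0)(e) = x0 e` and `ψ_d(x1)(e) = x0 (d ⧢ e)`. -/
def psiLetter (d : Series) (i : Fin 2) (e : Series) : Series :=
  if i = 0 then lconcat 0 e else lconcat 0 (sh d e)

/-- `ψ_d(η)`, determined by `ψ_d(x_i η) = ψ_d(x_i) ∘ ψ_d(η)` and `ψ_d(∅) = id`. -/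
def psi (d : Series) : Word → Series → Series
  | [], e => e
  | i :: η, e => psiLetter d i (psi d η e)

/-- The composition product `c ∘ d = Σ_η ⟨c,η⟩ ψ_d(η)(1)`. -/
def comp (c d : Series) : Series := fun w => ∑' η : Word, c η * psi d η one w

/-- The group operation on `ℝ⟨⟨X_δ⟩⟩ = {δ + c}`, transported to the `c`-parts:
`c_δ ∘ d_δ = δ + (d + c ∘̃ d)`. -/
def gop (c d : Series) : Series := d + mcomp c d

/-- The Ferfera series `c = Σ_{k ≥ 0} k! x1^k`. -/
def ferfera : Series := fun w =>
  if w = List.replicate w.length (1 : Fin 2) then (Nat.factorial w.length : ℝ) else 0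

/-- The degree of a word, `deg(η) = 2|η|_{x0} + |η|_{x1} + 1`. -/
def degW (η : Word) : ℕ := 2 * η.count 0 + η.count 1 + 1

/-- The output feedback Hopf algebra `H`: the free unital commutative `ℝ`-algebra on the
coordinate functions `a_η`, realized as polynomials in commuting variables indexed by words. -/
abbrev H : Type := MvPolynomial Word ℝ

/-- The coordinate function `a_η`. -/
def aw (η : Word) : H := MvPolynomial.X η

/-- Character (pointwise) evaluation of elements of `H` at a series `c`:
`(a_{η₁} ⋯ a_{η_l})(c) = ⟨c,η₁⟩ ⋯ ⟨c,η_l⟩`, extended as an algebra map. -/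
def evalS (c : Series) : H →ₐ[ℝ] ℝ := MvPolynomial.aeval c

/-- Evaluation of `H ⊗ H` at a pair of series: `(p ⊗ q)(c,d) = p(c) q(d)`. -/
def evalPair (c d : Series) : H ⊗[ℝ] H →ₗ[ℝ] ℝ :=
  (LinearMap.mul' ℝ ℝ).comp (TensorProduct.map (evalS c).toLinearMap (evalS d).toLinearMap)

/-- The counit `ε` of `H`: `ε(a_η) = 0`, `ε(1) = 1`. -/
def counit : H →ₐ[ℝ] ℝ := evalS 0

/-- The defining property of the full coproduct `Δ` of the output feedback Hopf algebra:
`Δ a_η = Δ̃ a_η + 1 ⊗ a_η` where `Δ̃ a_η (c,d) = ⟨c ∘̃ d, η⟩`, i.e.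
`(Δ a_η)(c,d) = ⟨c ∘̃ d, η⟩ + ⟨d, η⟩` for all series `c, d`; `Δ` is an algebra morphism. -/
def IsFBCoproduct (Δ : H →ₐ[ℝ] (H ⊗[ℝ] H)) : Prop :=
  ∀ (η : Word) (c d : Series), evalPair c d (Δ (aw η)) = mcomp c d η + d η

/-- `S` is an antipode for the coproduct `Δ` (with counit `ε`):
`μ ∘ (S ⊗ id) ∘ Δ = 1·ε = μ ∘ (id ⊗ S) ∘ Δ`. -/
def IsAntipode (Δ : H →ₐ[ℝ] (H ⊗[ℝ] H)) (S : H →ₗ[ℝ] H) : Prop :=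
  (∀ p : H, LinearMap.mul' ℝ H (TensorProduct.map S LinearMap.id (Δ p)) = counit p • 1) ∧
  (∀ p : H, LinearMap.mul' ℝ H (TensorProduct.map LinearMap.id S (Δ p)) = counit p • 1)

/-- The right-augmentation operator `θ̃_i`, the derivation on `H` with `θ̃_i(a_η) = a_{η x_i}`. -/
def thetaR (i : Fin 2) : Derivation ℝ H H :=
  MvPolynomial.mkDerivation ℝ fun η => aw (η ++ [i])

/-- The left-augmentation operator `θ_i`, the derivation on `H` with `θ_i(a_η) = a_{x_i η}`. -/
def thetaL (i : Fin 2) : Derivation ℝ H H :=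
  MvPolynomial.mkDerivation ℝ fun η => aw (i :: η)

/-- The multiplication operator `κ_∅(h) = h · a_∅`. -/
def kappaE : H →ₗ[ℝ] H := LinearMap.mulRight ℝ (aw [])

/-- The shuffle coefficient `⟨ξ ⧢ ν, η⟩`. -/
def shCoeff (ξ ν η : Word) : ℝ := sh (ind ξ) (ind ν) η

/-- The finite set of words of length `n`. -/
def wordsLen (n : ℕ) : Finset Word :=
  (Finset.univ : Finset (Fin n → Fin 2)).image List.ofFn

/-- The deshuffle coproduct `Δ_⧢ a_η = Σ_{ξ,ν} ⟨ξ ⧢ ν, η⟩ a_ξ ⊗ a_ν`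
(the unique coproduct satisfying `Δ_⧢ a_∅ = a_∅ ⊗ a_∅` and the coderivation recursions
with respect to the augmentation operators). -/
def deshuffle (η : Word) : H ⊗[ℝ] H :=
  ∑ k ∈ Finset.range (η.length + 1), ∑ ξ ∈ wordsLen k, ∑ ν ∈ wordsLen (η.length - k),
    shCoeff ξ ν η • (aw ξ ⊗ₜ[ℝ] aw ν)

/-- Iterated integrals: `E_∅[u](t) = 1`, `E_{x_i η}[u](t) = ∫₀ᵗ u_i(s) E_η[u](s) ds`. -/
def E (u : Fin 2 → ℝ → ℝ) : Word → ℝ → ℝ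
  | [], _ => 1
  | i :: η, t => ∫ s in (0:ℝ)..t, u i s * E u η s

end Paper

namespace Paper

open MeasureTheory Set

/-! ### Combinatorial lemmas about the shuffle product -/

lemma shuffleFn_zero_left : ∀ (w : Word) (d : Series), shuffleFn 0 d w = 0
  | [], d => by simp [shuffleFn]
  | i :: w, d => by
      have h1 : lshift i (0 : Series) = 0 := rfl
      simp [shuffleFn, h1, shuffleFn_zero_left w]

lemma shuffleFn_zero_right : ∀ (w : Word) (c : Series), shuffleFn c 0 w = 0
  | [], c => by simp [shuffleFn]
  | i :: w, c => by
      have h1 : lshift i (0 : Series) = 0 := rfl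
      simp [shuffleFn, h1, shuffleFn_zero_right w]

lemma lshift_ind_nil (k : Fin 2) : lshift k (ind []) = 0 := by
  funext w; simp [lshift, ind]

lemma lshift_ind_cons (k i : Fin 2) (α : Word) :
    lshift k (ind (i :: α)) = if k = i then ind α else 0 := by
  funext w
  simp only [lshift, ind, List.cons.injEq]
  by_cases h : k = i <;> simp [h, ind]

lemma shuffleFn_one_left : ∀ (w : Word) (c : Series), shuffleFn (ind []) c w = c w
  | [], c => by simp [shuffleFn, ind]
  | i :: w, c => by
      simp only [shuffleFn]
      rw [lshift_ind_nil, shuffleFn_zero_left, shuffleFn_one_left w]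
      simp [lshift]

lemma shuffleFn_one_right : ∀ (w : Word) (c : Series), shuffleFn c (ind []) w = c w
  | [], c => by simp [shuffleFn, ind]
  | i :: w, c => by
      simp only [shuffleFn]
      rw [lshift_ind_nil, shuffleFn_zero_right, shuffleFn_one_right w]
      simp [lshift]

lemma shuffleFn_ind_ne_length : ∀ (w η ξ : Word), w.length ≠ η.length + ξ.length →
    shuffleFn (ind η) (ind ξ) w = 0
  | [], η, ξ, h => by
      cases η with
      | nil =>
        cases ξ with
        | nil => simp at h
        | cons j β => simp [shuffleFn, ind]
      | cons i α => simp [shuffleFn, ind]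
  | k :: w, η, ξ, h => by
      have hl : ∀ (α β : Word), w.length ≠ α.length + β.length →
          shuffleFn (ind α) (ind β) w = 0 := fun α β => shuffleFn_ind_ne_length w α β
      simp only [shuffleFn]
      have h1 : shuffleFn (lshift k (ind η)) (ind ξ) w = 0 := by
        cases η with
        | nil => rw [lshift_ind_nil]; exact shuffleFn_zero_left w _
        | cons i α =>
          rw [lshift_ind_cons]
          by_cases hk : k = i
          · rw [if_pos hk]
            exact hl α ξ (by simp [List.length_cons] at h ⊢; omega)
          · rw [if_neg hk]; exact shuffleFn_zero_left w _
      have h2 : shuffleFn (ind η) (lshift k (ind ξ)) w = 0 := by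
        cases ξ with
        | nil => rw [lshift_ind_nil]; exact shuffleFn_zero_right w _
        | cons j β =>
          rw [lshift_ind_cons]
          by_cases hk : k = j
          · rw [if_pos hk]
            exact hl η β (by simp [List.length_cons] at h ⊢; omega)
          · rw [if_neg hk]; exact shuffleFn_zero_right w _
      rw [h1, h2, add_zero]

lemma mem_wordsLen {n : ℕ} {w : Word} : w ∈ wordsLen n ↔ w.length = n := by
  constructor
  · intro h
    rcases Finset.mem_image.1 h with ⟨f, _, rfl⟩
    simp
  · rintro rfl
    exact Finset.mem_image.2 ⟨w.get, Finset.mem_univ _, List.ofFn_get w⟩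

lemma sum_wordsLen_succ (n : ℕ) (F : Word → ℝ) :
    ∑ w ∈ wordsLen (n + 1), F w = ∑ k : Fin 2, ∑ w ∈ wordsLen n, F (k :: w) := by
  rw [wordsLen, Finset.sum_image (fun f _ g _ h => List.ofFn_injective h)]
  rw [← Equiv.sum_comp (Fin.consEquiv fun _ => Fin 2) (fun f => F (List.ofFn f))]
  rw [Fintype.sum_prod_type]
  refine Finset.sum_congr rfl fun k _ => ?_
  rw [wordsLen, Finset.sum_image (fun f _ g _ h => List.ofFn_injective h)]
  refine Finset.sum_congr rfl fun g _ => ?_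
  congr 1
  simp [Fin.consEquiv, List.ofFn_succ]

end Paper

namespace Paper

open MeasureTheory Set

/-! ### Analytic lemmas about iterated integrals -/

lemma E_cont_integrable {T : ℝ} {u : Fin 2 → ℝ → ℝ} (hT : 0 ≤ T)
    (hm : ∀ i, Measurable (u i))
    (hb : ∀ i, ∃ C : ℝ, ∀ t ∈ Set.Icc (0:ℝ) T, |u i t| ≤ C) :
    ∀ w : Word, ContinuousOn (E u w) (Set.Icc 0 T) ∧
      ∀ i, IntegrableOn (fun s => u i s * E u w s) (Set.Icc 0 T) := by
  intro w
  induction w with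
  | nil =>
    constructor
    · have h : E u [] = fun _ : ℝ => (1:ℝ) := rfl
      rw [h]; exact continuousOn_const
    · intro i
      obtain ⟨C, hC⟩ := hb i
      have h : (fun s => u i s * E u [] s) = fun s => u i s := by
        funext s; simp [E]
      rw [h]
      refine ⟨(hm i).aestronglyMeasurable.restrict, ?_⟩
      refine HasFiniteIntegral.restrict_of_bounded (C := C) measure_Icc_lt_top ?_
      exact (ae_restrict_iff' measurableSet_Icc).2 (ae_of_all _ fun s hs => by
        simpa [Real.norm_eq_abs] using hC s hs)
  | cons j w ih =>
    obtain ⟨hcont, hint⟩ := ih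
    have h1 : Set.uIcc (0:ℝ) T = Set.Icc 0 T := Set.uIcc_of_le hT
    have hEcont : ContinuousOn (E u (j :: w)) (Set.Icc 0 T) := by
      have h2 := intervalIntegral.continuousOn_primitive_interval
        (a := 0) (b := T) (μ := volume) (f := fun s => u j s * E u w s)
        (by rw [h1]; exact hint j)
      rw [h1] at h2
      exact h2
    refine ⟨hEcont, fun i => ?_⟩
    obtain ⟨C, hC⟩ := hb i
    obtain ⟨M, hM⟩ := isCompact_Icc.exists_bound_of_continuousOn hEcont
    refine ⟨((hm i).aemeasurable.restrict.mul
        (hEcont.aemeasurable measurableSet_Icc)).aestronglyMeasurable, ?_⟩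
    refine HasFiniteIntegral.restrict_of_bounded (C := C * M) measure_Icc_lt_top ?_
    refine (ae_restrict_iff' measurableSet_Icc).2 (ae_of_all _ fun s hs => ?_)
    have hC0 : 0 ≤ C := (abs_nonneg _).trans (hC s hs)
    have h2 := hM s hs
    calc ‖u i s * E u (j :: w) s‖ = |u i s| * ‖E u (j :: w) s‖ := by
          rw [Real.norm_eq_abs, abs_mul, Real.norm_eq_abs]
      _ ≤ C * M := mul_le_mul (hC s hs) h2 (norm_nonneg _) hC0

lemma mul_intervalIntegral {t : ℝ} (ht : 0 ≤ t) {f g : ℝ → ℝ}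
    (hf : IntegrableOn f (Set.Ioc 0 t)) (hg : IntegrableOn g (Set.Ioc 0 t)) :
    (∫ s in (0:ℝ)..t, f s) * (∫ s in (0:ℝ)..t, g s)
      = (∫ s in (0:ℝ)..t, f s * ∫ r in (0:ℝ)..s, g r)
        + ∫ s in (0:ℝ)..t, (∫ r in (0:ℝ)..s, f r) * g s := by
  set μ := volume.restrict (Set.Ioc (0:ℝ) t) with hμdef
  have hfμ : Integrable f μ := hf
  have hgμ : Integrable g μ := hg
  have Hprod : Integrable (fun p : ℝ × ℝ => f p.1 * g p.2) (μ.prod μ) := hfμ.mul_prod hgμ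
  have hA : MeasurableSet {p : ℝ × ℝ | p.2 ≤ p.1} :=
    measurableSet_le measurable_snd measurable_fst
  have hInd1 : Integrable ({p : ℝ × ℝ | p.2 ≤ p.1}.indicator fun p => f p.1 * g p.2)
      (μ.prod μ) := Hprod.indicator hA
  have hInd2 : Integrable ({p : ℝ × ℝ | p.2 ≤ p.1}ᶜ.indicator fun p => f p.1 * g p.2)
      (μ.prod μ) := Hprod.indicator hA.compl
  have t1 : ∫ p in {p : ℝ × ℝ | p.2 ≤ p.1}, f p.1 * g p.2 ∂(μ.prod μ)
      = ∫ x, f x * (∫ r in Set.Ioc 0 x, g r) ∂μ := by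
    rw [← integral_indicator hA, MeasureTheory.integral_prod _ hInd1]
    refine integral_congr_ae ?_
    filter_upwards [ae_restrict_mem measurableSet_Ioc] with x hx
    have hxy : ∀ y : ℝ, ({p : ℝ × ℝ | p.2 ≤ p.1}.indicator fun p => f p.1 * g p.2) (x, y)
        = (Set.Iic x).indicator (fun y => f x * g y) y := by
      intro y
      rw [Set.indicator_apply, Set.indicator_apply]
      simp only [Set.mem_setOf_eq, Set.mem_Iic]
    simp_rw [hxy]
    rw [integral_indicator measurableSet_Iic, hμdef,
      Measure.restrict_restrict measurableSet_Iic]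
    have hset : Set.Iic x ∩ Set.Ioc 0 t = Set.Ioc 0 x := by
      ext y
      simp only [Set.mem_inter_iff, Set.mem_Iic, Set.mem_Ioc]
      constructor
      · rintro ⟨a, b, _⟩; exact ⟨b, a⟩
      · rintro ⟨a, b⟩; exact ⟨b, a, b.trans hx.2⟩
    rw [hset, MeasureTheory.integral_const_mul]
  have t2 : ∫ p in {p : ℝ × ℝ | p.2 ≤ p.1}ᶜ, f p.1 * g p.2 ∂(μ.prod μ)
      = ∫ y, (∫ r in Set.Ioc 0 y, f r) * g y ∂μ := by
    rw [← integral_indicator hA.compl, MeasureTheory.integral_prod_symm _ hInd2]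
    refine integral_congr_ae ?_
    filter_upwards [ae_restrict_mem measurableSet_Ioc] with y hy
    have hxy : ∀ x : ℝ, ({p : ℝ × ℝ | p.2 ≤ p.1}ᶜ.indicator fun p => f p.1 * g p.2) (x, y)
        = (Set.Iio y).indicator (fun x => f x * g y) x := by
      intro x
      rw [Set.indicator_apply, Set.indicator_apply]
      simp only [Set.mem_compl_iff, Set.mem_setOf_eq, Set.mem_Iio, not_le]
    simp_rw [hxy]
    rw [integral_indicator measurableSet_Iio, hμdef,
      Measure.restrict_restrict measurableSet_Iio]
    have hset : Set.Iio y ∩ Set.Ioc 0 t = Set.Ioo 0 y := by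
      ext x
      simp only [Set.mem_inter_iff, Set.mem_Iio, Set.mem_Ioc, Set.mem_Ioo]
      constructor
      · rintro ⟨a, b, _⟩; exact ⟨b, a⟩
      · rintro ⟨a, b⟩; exact ⟨b, a, (b.trans_le hy.2).le⟩
    rw [hset, ← MeasureTheory.integral_Ioc_eq_integral_Ioo,
      MeasureTheory.integral_mul_const]
  have R1 : (∫ s in (0:ℝ)..t, f s * ∫ r in (0:ℝ)..s, g r)
      = ∫ x, f x * (∫ r in Set.Ioc 0 x, g r) ∂μ := by
    rw [intervalIntegral.integral_of_le ht]
    refine integral_congr_ae ?_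
    filter_upwards [ae_restrict_mem measurableSet_Ioc] with x hx
    rw [intervalIntegral.integral_of_le hx.1.le]
  have R2 : (∫ s in (0:ℝ)..t, (∫ r in (0:ℝ)..s, f r) * g s)
      = ∫ y, (∫ r in Set.Ioc 0 y, f r) * g y ∂μ := by
    rw [intervalIntegral.integral_of_le ht]
    refine integral_congr_ae ?_
    filter_upwards [ae_restrict_mem measurableSet_Ioc] with y hy
    rw [intervalIntegral.integral_of_le hy.1.le]
  calc (∫ s in (0:ℝ)..t, f s) * (∫ s in (0:ℝ)..t, g s)
      = (∫ x, f x ∂μ) * ∫ y, g y ∂μ := by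
        rw [intervalIntegral.integral_of_le ht, intervalIntegral.integral_of_le ht]
    _ = ∫ p, f p.1 * g p.2 ∂(μ.prod μ) := (MeasureTheory.integral_prod_mul f g).symm
    _ = (∫ p in {p : ℝ × ℝ | p.2 ≤ p.1}, f p.1 * g p.2 ∂(μ.prod μ))
        + ∫ p in {p : ℝ × ℝ | p.2 ≤ p.1}ᶜ, f p.1 * g p.2 ∂(μ.prod μ) :=
        (MeasureTheory.integral_add_compl hA Hprod).symm
    _ = (∫ s in (0:ℝ)..t, f s * ∫ r in (0:ℝ)..s, g r)
        + ∫ s in (0:ℝ)..t, (∫ r in (0:ℝ)..s, f r) * g s := by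
        rw [t1, t2, R1, R2]

end Paper





set_option maxHeartbeats 1000000

open Paper in
/-- For words `η, ξ` over `X = {x0, x1}` and measurable, locally bounded
input functions `u = {u0, u1}` on `[0,T]`, the iterated integrals satisfy
`E_η[u](t) · E_ξ[u](t) = E_{η ⧢ ξ}[u](t)` for all `t ∈ [0,T]`, where `E` is extended
linearly from words to polynomials in words. -/
theorem iterated_integral_shuffle
    (T : ℝ) (hT : 0 ≤ T) (u : Fin 2 → ℝ → ℝ)
    (humeas : ∀ i, Measurable (u i))
    (hubdd : ∀ i, ∃ C : ℝ, ∀ t ∈ Set.Icc (0:ℝ) T, |u i t| ≤ C)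
    (η ξ : Word) :
    ∀ t ∈ Set.Icc (0:ℝ) T,
      E u η t * E u ξ t = ∑' w : Word, sh (ind η) (ind ξ) w * E u w t := by
  have haux := E_cont_integrable hT humeas hubdd
  have hII : ∀ (i : Fin 2) (w : Word) (t : ℝ), t ∈ Set.Icc (0:ℝ) T →
      IntervalIntegrable (fun s => u i s * E u w s) MeasureTheory.volume 0 t := by
    intro i w t ht
    refine (intervalIntegrable_iff_integrableOn_Ioc_of_le ht.1).2
      (((haux w).2 i).mono_set ?_)
    exact fun s hs => ⟨hs.1.le, hs.2.trans ht.2⟩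
  have key : ∀ n : ℕ, ∀ η ξ : Word, η.length + ξ.length = n → ∀ t ∈ Set.Icc (0:ℝ) T,
      E u η t * E u ξ t = ∑ w ∈ wordsLen n, shuffleFn (ind η) (ind ξ) w * E u w t := by
    intro n
    induction n using Nat.strong_induction_on with
    | _ n IHn =>
      intro η ξ hn t ht
      cases η with
      | nil =>
        have hξ : ξ ∈ wordsLen n := mem_wordsLen.2 (by simpa using hn)
        have hterm : ∀ w ∈ wordsLen n,
            shuffleFn (ind []) (ind ξ) w * E u w t
              = if w = ξ then E u ξ t else 0 := by
          intro w _
          rw [shuffleFn_one_left]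
          simp only [ind]
          by_cases h : w = ξ
          · subst h; simp
          · simp [h]
        rw [Finset.sum_congr rfl hterm,
          Finset.sum_ite_eq' (wordsLen n) ξ (fun _ => E u ξ t), if_pos hξ]
        have h1 : E u [] t = 1 := rfl
        rw [h1, one_mul]
      | cons i α =>
        cases ξ with
        | nil =>
          have hη : (i :: α) ∈ wordsLen n := mem_wordsLen.2 (by simpa using hn)
          have hterm : ∀ w ∈ wordsLen n,
              shuffleFn (ind (i :: α)) (ind []) w * E u w t
                = if w = (i :: α) then E u (i :: α) t else 0 := by
            intro w _
            rw [shuffleFn_one_right]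
            simp only [ind]
            by_cases h : w = (i :: α)
            · subst h; simp
            · simp [h]
          rw [Finset.sum_congr rfl hterm,
            Finset.sum_ite_eq' (wordsLen n) (i :: α) (fun _ => E u (i :: α) t), if_pos hη]
          have h1 : E u [] t = 1 := rfl
          rw [h1, mul_one]
        | cons j β =>
          obtain ⟨m, rfl⟩ : ∃ m, n = m + 1 :=
            ⟨α.length + β.length + 1, by simp [List.length_cons] at hn; omega⟩
          have hm1 : α.length + (j :: β).length = m := by
            simp [List.length_cons] at hn ⊢; omega
          have hm2 : (i :: α).length + β.length = m := by
            simp [List.length_cons] at hn ⊢; omega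
          have IH1 := IHn m (Nat.lt_succ_self m) α (j :: β) hm1
          have IH2 := IHn m (Nat.lt_succ_self m) (i :: α) β hm2
          have ht0 : 0 ≤ t := ht.1
          have hsub : Set.Ioc (0:ℝ) t ⊆ Set.Icc 0 T :=
            fun s hs => ⟨hs.1.le, hs.2.trans ht.2⟩
          have hf : MeasureTheory.IntegrableOn (fun s => u i s * E u α s) (Set.Ioc 0 t) :=
            ((haux α).2 i).mono_set hsub
          have hg : MeasureTheory.IntegrableOn (fun s => u j s * E u β s) (Set.Ioc 0 t) :=
            ((haux β).2 j).mono_set hsub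
          have hprod := mul_intervalIntegral ht0 hf hg
          have hE1 : E u (i :: α) t = ∫ s in (0:ℝ)..t, u i s * E u α s := rfl
          have hE2 : E u (j :: β) t = ∫ s in (0:ℝ)..t, u j s * E u β s := rfl
          rw [hE1, hE2, hprod]
          have S1 : (∫ s in (0:ℝ)..t, (u i s * E u α s) * ∫ r in (0:ℝ)..s, u j r * E u β r)
              = ∑ w ∈ wordsLen m, shuffleFn (ind α) (ind (j :: β)) w * E u (i :: w) t := by
            have hcg : Set.EqOn
                (fun s => (u i s * E u α s) * ∫ r in (0:ℝ)..s, u j r * E u β r)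
                (fun s => ∑ w ∈ wordsLen m,
                  shuffleFn (ind α) (ind (j :: β)) w * (u i s * E u w s))
                (Set.uIcc 0 t) := by
              intro s hs
              have hs' : s ∈ Set.Icc (0:ℝ) T := by
                rw [Set.uIcc_of_le ht0] at hs
                exact ⟨hs.1, hs.2.trans ht.2⟩
              have hEe : (∫ r in (0:ℝ)..s, u j r * E u β r) = E u (j :: β) s := rfl
              show (u i s * E u α s) * (∫ r in (0:ℝ)..s, u j r * E u β r)
                = ∑ w ∈ wordsLen m, shuffleFn (ind α) (ind (j :: β)) w * (u i s * E u w s)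
              rw [hEe]
              calc (u i s * E u α s) * E u (j :: β) s
                  = u i s * (E u α s * E u (j :: β) s) := by ring
                _ = u i s * ∑ w ∈ wordsLen m,
                      shuffleFn (ind α) (ind (j :: β)) w * E u w s := by
                    rw [IH1 s hs']
                _ = ∑ w ∈ wordsLen m,
                      shuffleFn (ind α) (ind (j :: β)) w * (u i s * E u w s) := by
                    rw [Finset.mul_sum]
                    exact Finset.sum_congr rfl fun w _ => by ring
            rw [intervalIntegral.integral_congr hcg,
              intervalIntegral.integral_finset_sum
                (fun w _ => ((hII i w t ht).const_mul _))]
            refine Finset.sum_congr rfl fun w _ => ?_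
            rw [intervalIntegral.integral_const_mul]
            rfl
          have S2 : (∫ s in (0:ℝ)..t, (∫ r in (0:ℝ)..s, u i r * E u α r) * (u j s * E u β s))
              = ∑ w ∈ wordsLen m, shuffleFn (ind (i :: α)) (ind β) w * E u (j :: w) t := by
            have hcg : Set.EqOn
                (fun s => (∫ r in (0:ℝ)..s, u i r * E u α r) * (u j s * E u β s))
                (fun s => ∑ w ∈ wordsLen m,
                  shuffleFn (ind (i :: α)) (ind β) w * (u j s * E u w s))
                (Set.uIcc 0 t) := by
              intro s hs
              have hs' : s ∈ Set.Icc (0:ℝ) T := by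
                rw [Set.uIcc_of_le ht0] at hs
                exact ⟨hs.1, hs.2.trans ht.2⟩
              have hEe : (∫ r in (0:ℝ)..s, u i r * E u α r) = E u (i :: α) s := rfl
              show (∫ r in (0:ℝ)..s, u i r * E u α r) * (u j s * E u β s)
                = ∑ w ∈ wordsLen m, shuffleFn (ind (i :: α)) (ind β) w * (u j s * E u w s)
              rw [hEe]
              calc E u (i :: α) s * (u j s * E u β s)
                  = u j s * (E u (i :: α) s * E u β s) := by ring
                _ = u j s * ∑ w ∈ wordsLen m,
                      shuffleFn (ind (i :: α)) (ind β) w * E u w s := by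
                    rw [IH2 s hs']
                _ = ∑ w ∈ wordsLen m,
                      shuffleFn (ind (i :: α)) (ind β) w * (u j s * E u w s) := by
                    rw [Finset.mul_sum]
                    exact Finset.sum_congr rfl fun w _ => by ring
            rw [intervalIntegral.integral_congr hcg,
              intervalIntegral.integral_finset_sum
                (fun w _ => ((hII j w t ht).const_mul _))]
            refine Finset.sum_congr rfl fun w _ => ?_
            rw [intervalIntegral.integral_const_mul]
            rfl
          rw [S1, S2, sum_wordsLen_succ]
          have hterm : ∀ k : Fin 2, ∀ w ∈ wordsLen m,
              shuffleFn (ind (i :: α)) (ind (j :: β)) (k :: w) * E u (k :: w) t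
                = (if k = i then shuffleFn (ind α) (ind (j :: β)) w * E u (k :: w) t else 0)
                  + (if k = j then shuffleFn (ind (i :: α)) (ind β) w * E u (k :: w) t
                      else 0) := by
            intro k w _
            show (shuffleFn (lshift k (ind (i :: α))) (ind (j :: β)) w
                + shuffleFn (ind (i :: α)) (lshift k (ind (j :: β))) w) * E u (k :: w) t = _
            rw [lshift_ind_cons, lshift_ind_cons]
            by_cases h1 : k = i <;> by_cases h2 : k = j
            · have hij : i = j := h1.symm.trans h2
              simp [h1, h2, hij, shuffleFn_zero_left, shuffleFn_zero_right, add_mul]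
            · have hij : ¬ i = j := fun h => h2 (h1.trans h)
              simp [h1, h2, hij, shuffleFn_zero_left, shuffleFn_zero_right, add_mul]
            · have hij : ¬ j = i := fun h => h1 (h2.trans h)
              simp [h1, h2, hij, shuffleFn_zero_left, shuffleFn_zero_right, add_mul]
            · simp [h1, h2, shuffleFn_zero_left, shuffleFn_zero_right, add_mul]
          rw [Finset.sum_congr rfl fun k _ => Finset.sum_congr rfl (hterm k)]
          simp only [Finset.sum_add_distrib]
          congr 1
          · rw [Finset.sum_comm]
            exact (Finset.sum_congr rfl fun w _ => by
              rw [Fintype.sum_ite_eq' i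
                (fun k => shuffleFn (ind α) (ind (j :: β)) w * E u (k :: w) t)]).symm
          · rw [Finset.sum_comm]
            exact (Finset.sum_congr rfl fun w _ => by
              rw [Fintype.sum_ite_eq' j
                (fun k => shuffleFn (ind (i :: α)) (ind β) w * E u (k :: w) t)]).symm
  intro t ht
  have hts : (∑' w : Word, sh (ind η) (ind ξ) w * E u w t)
      = ∑ w ∈ wordsLen (η.length + ξ.length), shuffleFn (ind η) (ind ξ) w * E u w t := by
    apply tsum_eq_sum
    intro w hw
    have hlen : w.length ≠ η.length + ξ.length := fun h => hw (mem_wordsLen.2 h)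
    have : sh (ind η) (ind ξ) w = shuffleFn (ind η) (ind ξ) w := rfl
    rw [this, shuffleFn_ind_ne_length w η ξ hlen, zero_mul]
  rw [hts]
  exact key _ η ξ rfl t ht
end
end

section
/- The algebra H of coordinate functions with product μ, full coproduct Δ, counit ε, and antipode S is a connected graded commutative non-cocommutative Hopf algebra, graded by deg(a_η) = 2|η|_{x0} + |η|_{x1} + 1 extended multiplicatively with deg(1) = 0. -/
open scoped TensorProduct

noncomputable section

/-!
Elements of `H` are polynomial functions on `ℝ⟨⟨X⟩⟩`; since `ℝ` is infinite, elements of `H`,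
`H ⊗ H` and `H ⊗ (H ⊗ H)` are determined by their values at (tuples of) series.
Running `φ` over the ring `H` on the generic series `Σ_ν a_ν ν` gives polynomials whose value
at `d` is `⟨φ_d(ξ)(1), η⟩`. Taking them as coefficients,
`Δ a_η = Σ_ξ a_ξ ⊗ ⟨φ_a(ξ)(1), η⟩ + 1 ⊗ a_η` satisfies `(Δ p)(c, d) = p(d + c ∘̃ d)`, so
coassociativity, counitality and the antipode reduce to `ℝ⟨⟨X⟩⟩` being a group under
`(c, d) ↦ d + c ∘̃ d` with neutral element `0`. Associativity follows from the recursions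
`x1⁻¹(c ∘̃ d) = x1⁻¹c ∘̃ d` and `x0⁻¹(c ∘̃ d) = x0⁻¹c ∘̃ d + d ⧢ (x1⁻¹c ∘̃ d)`, which also make
`∘̃ d` a shuffle endomorphism.

With `x0` of weight 2 and `x1` of weight 1, the coefficient `⟨φ_a(ξ)(1), η⟩` is homogeneous of
degree `deg η - deg ξ`, vanishes if `deg ξ > deg η` and is `δ_{ξη}` if the degrees agree. This
gives the grading of `Δ`, and lets the antipode be defined by recursion on the degree as a left
inverse for the group law; since every series has a left inverse, it is a two-sided one.
-/

namespace MvPolynomial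

open Algebra.TensorProduct

variable {K σ ι κ : Type*}

lemma aeval_sumElim_tensorEquivSum [CommSemiring K] (x : σ → K) (y : ι → K)
    (t : MvPolynomial σ K ⊗[K] MvPolynomial ι K) :
    aeval (Sum.elim x y) (tensorEquivSum K σ ι K t) = productMap (aeval x) (aeval y) t := by
  suffices (aeval (Sum.elim x y)).comp (tensorEquivSum K σ ι K).toAlgHom =
      productMap (aeval x) (aeval y) from AlgHom.congr_fun this t
  ext <;> simp

lemma weightedHomogeneousSubmodule_zero_eq_span_one [CommSemiring K] {w : σ → ℕ}
    (hw : ∀ i, w i ≠ 0) : weightedHomogeneousSubmodule K w 0 = Submodule.span K {1} := by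
  classical
  refine le_antisymm (fun p hp => ?_) ?_
  · have hp0 := weightedHomogeneousComponent_of_mem (m := 0) hp
    rw [weightedHomogeneousComponent_zero _ hw, if_pos rfl] at hp0
    rw [← hp0, Submodule.mem_span_singleton]
    exact ⟨coeff 0 p, by rw [smul_eq_C_mul, mul_one]⟩
  · rw [Submodule.span_le, Set.singleton_subset_iff]
    exact isWeightedHomogeneous_one K w

lemma aeval_mem_of_isWeightedHomogeneous {A : Type*} [CommSemiring K] [CommSemiring A]
    [Algebra K A] (𝒜 : ℕ → Submodule K A) [SetLike.GradedMonoid 𝒜] {w : σ → ℕ}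
    (f : MvPolynomial σ K →ₐ[K] A) (hf : ∀ i, f (X i) ∈ 𝒜 (w i)) {p : MvPolynomial σ K}
    {n : ℕ} (hp : p.IsWeightedHomogeneous w n) : f p ∈ 𝒜 n := by
  rw [p.as_sum, map_sum]
  refine Submodule.sum_mem _ fun m hm => ?_
  rw [← hp (mem_support_iff.mp hm), ← mul_one (coeff m p), ← smul_eq_mul, ← smul_monomial,
    map_smul, monomial_eq, map_one, one_mul, Finsupp.prod, map_prod]
  refine Submodule.smul_mem _ _ ?_
  simpa [Finsupp.weight_apply, Finsupp.sum] using
    SetLike.prod_pow_mem_graded 𝒜 w (fun i => f (X i)) m fun i _ => hf i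

variable [CommRing K] [IsDomain K] [Infinite K]

lemma tensor_ext_of_aeval {t t' : MvPolynomial σ K ⊗[K] MvPolynomial ι K}
    (h : ∀ (x : σ → K) (y : ι → K),
      productMap (aeval x) (aeval y) t = productMap (aeval x) (aeval y) t') :
    t = t' := by
  refine (tensorEquivSum K σ ι K).injective (funext fun z => ?_)
  have := h (z ∘ Sum.inl) (z ∘ Sum.inr)
  rwa [← aeval_sumElim_tensorEquivSum, ← aeval_sumElim_tensorEquivSum, Sum.elim_comp_inl_inr]
    at this

lemma tensor_ext_of_aeval₃
    {t t' : MvPolynomial σ K ⊗[K] (MvPolynomial ι K ⊗[K] MvPolynomial κ K)}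
    (h : ∀ (x : σ → K) (y : ι → K) (z : κ → K),
      productMap (aeval x) (productMap (aeval y) (aeval z)) t =
        productMap (aeval x) (productMap (aeval y) (aeval z)) t') :
    t = t' := by
  let e := Algebra.TensorProduct.congr (AlgEquiv.refl (R := K) (A₁ := MvPolynomial σ K))
    (tensorEquivSum K ι κ K)
  have he : ∀ (x : σ → K) (w : ι ⊕ κ → K), (productMap (aeval x) (aeval w)).comp e.toAlgHom =
      productMap (aeval x) (productMap (aeval (w ∘ Sum.inl)) (aeval (w ∘ Sum.inr))) := by
    intro x w
    ext <;> simp [e]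
  refine e.injective (tensor_ext_of_aeval fun x w => ?_)
  simpa [← he] using h x (w ∘ Sum.inl) (w ∘ Sum.inr)

end MvPolynomial

/-! The constructions of `Paper`, for coefficients in any commutative semiring. -/

namespace WordSeries

open Paper (Word wordsLen)

@[elab_as_elim]
lemma induction_on_length {motive : Word → Prop} (nil : motive [])
    (cons : ∀ i w, (∀ v : Word, v.length ≤ w.length → motive v) → motive (i :: w))
    (w : Word) : motive w := by
  induction hn : w.length using Nat.strong_induction_on generalizing w with
  | _ n ih =>
    cases w with
    | nil => exact nil
    | cons i w =>
      subst hn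
      exact cons i w fun v hv => ih v.length (Nat.lt_succ_of_le hv) v rfl

variable {R : Type*}

def lshift (i : Fin 2) (c : Word → R) : Word → R := fun w => c (i :: w)

@[simp] lemma lshift_apply (i : Fin 2) (c : Word → R) (w : Word) :
    lshift i c w = c (i :: w) := rfl

variable [CommSemiring R]

def lconcat (i : Fin 2) (c : Word → R) : Word → R
  | [] => 0
  | j :: v => if j = i then c v else 0

def sh : (Word → R) → (Word → R) → Word → R
  | c, d, [] => c [] * d []
  | c, d, i :: w => sh (lshift i c) d w + sh c (lshift i d) w

def ind (η : Word) : Word → R := fun w => if w = η then 1 else 0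

def one : Word → R := ind []

@[simp] lemma lconcat_nil (i : Fin 2) (c : Word → R) : lconcat i c [] = 0 := rfl

@[simp] lemma lconcat_cons (i j : Fin 2) (c : Word → R) (v : Word) :
    lconcat i c (j :: v) = if j = i then c v else 0 := rfl

@[simp] lemma sh_nil (c d : Word → R) : sh c d [] = c [] * d [] := rfl

@[simp] lemma sh_cons (c d : Word → R) (i : Fin 2) (w : Word) :
    sh c d (i :: w) = sh (lshift i c) d w + sh c (lshift i d) w := rfl

@[simp] lemma one_nil : (one : Word → R) [] = 1 := by simp [one, ind]

@[simp] lemma one_cons (j : Fin 2) (v : Word) : (one : Word → R) (j :: v) = 0 := by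
  simp [one, ind]

section Shuffle

lemma lshift_sh (i : Fin 2) (c d : Word → R) :
    lshift i (sh c d) = sh (lshift i c) d + sh c (lshift i d) := rfl

lemma sh_comm (c d : Word → R) : sh c d = sh d c := by
  funext w
  induction w generalizing c d with
  | nil => simp [mul_comm]
  | cons i w ih => simp only [sh_cons, ih, add_comm]

lemma sh_add_left (c c' d : Word → R) : sh (c + c') d = sh c d + sh c' d := by
  funext w
  induction w generalizing c c' d with
  | nil => simp [add_mul]
  | cons i w ih =>
    have : lshift i (c + c') = lshift i c + lshift i c' := rfl
    simp only [sh_cons, Pi.add_apply, this, ih]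
    ring

lemma sh_add_right (c d d' : Word → R) : sh c (d + d') = sh c d + sh c d' := by
  rw [sh_comm, sh_add_left, sh_comm d, sh_comm d']

lemma sh_smul_right (r : R) (c d : Word → R) : sh c (r • d) = r • sh c d := by
  funext w
  induction w generalizing c d with
  | nil => simp [mul_left_comm]
  | cons i w ih =>
    have : lshift i (r • d) = r • lshift i d := rfl
    simp only [sh_cons, this, ih, Pi.smul_apply, smul_add]

lemma sh_zero_right (c : Word → R) : sh c 0 = 0 := by
  simpa using sh_smul_right 0 c 0

lemma sh_zero_left (d : Word → R) : sh 0 d = 0 := by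
  rw [sh_comm, sh_zero_right]

lemma sh_sum_right {ι : Type*} (s : Finset ι) (c : Word → R) (f : ι → Word → R) :
    sh c (∑ x ∈ s, f x) = ∑ x ∈ s, sh c (f x) := by
  classical
  induction s using Finset.induction_on with
  | empty => simp [sh_zero_right]
  | insert a s ha ih => rw [Finset.sum_insert ha, Finset.sum_insert ha, sh_add_right, ih]

lemma sh_assoc (a b c : Word → R) : sh (sh a b) c = sh a (sh b c) := by
  funext w
  induction w generalizing a b c with
  | nil => simp [mul_assoc]
  | cons i w ih =>
    simp only [sh_cons, lshift_sh, sh_add_left, sh_add_right, Pi.add_apply, ih]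
    ring

lemma sh_left_comm (a b c : Word → R) : sh a (sh b c) = sh b (sh a c) := by
  rw [← sh_assoc, sh_comm a, sh_assoc]

lemma sh_apply_congr_right (c : Word → R) {d d' : Word → R} (w : Word)
    (h : ∀ v : Word, v.length ≤ w.length → d v = d' v) : sh c d w = sh c d' w := by
  induction w generalizing c d d' with
  | nil => simp [h [] le_rfl]
  | cons i w ih =>
    rw [sh_cons, sh_cons, ih _ fun v hv => h v (by simp; omega),
      ih (d := lshift i d) (d' := lshift i d') c fun v hv => h (i :: v) (by simpa using hv)]

end Shuffle

def phiLetter (d : Word → R) (i : Fin 2) (e : Word → R) : Word → R :=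
  if i = 0 then lconcat 0 e else lconcat 1 e + lconcat 0 (sh d e)

def phi (d : Word → R) : Word → (Word → R) → Word → R
  | [], e => e
  | i :: η, e => phiLetter d i (phi d η e)

@[simp] lemma phi_nil (d e : Word → R) : phi d [] e = e := rfl

@[simp] lemma phi_cons (d : Word → R) (i : Fin 2) (ξ : Word) (e : Word → R) :
    phi d (i :: ξ) e = phiLetter d i (phi d ξ e) := rfl

lemma phiLetter_zero (d e : Word → R) : phiLetter d 0 e = lconcat 0 e := if_pos rfl

lemma phiLetter_one (d e : Word → R) :
    phiLetter d 1 e = lconcat 1 e + lconcat 0 (sh d e) := if_neg (by decide)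

@[simp] lemma phiLetter_nil (d e : Word → R) (i : Fin 2) : phiLetter d i e [] = 0 := by
  fin_cases i <;> simp [phiLetter_zero, phiLetter_one]

lemma phiLetter_apply_cons (d e : Word → R) (i j : Fin 2) (v : Word) :
    phiLetter d i e (j :: v) =
      (if j = i then e v else 0) + (if i = 1 ∧ j = 0 then sh d e v else 0) := by
  fin_cases i <;> fin_cases j <;> simp [phiLetter_zero, phiLetter_one]

def weight (f : Fin 2 → ℕ) (w : Word) : ℕ := (w.map f).sum

@[simp] lemma weight_nil (f : Fin 2 → ℕ) : weight f [] = 0 := rfl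

@[simp] lemma weight_cons (f : Fin 2 → ℕ) (j : Fin 2) (v : Word) :
    weight f (j :: v) = f j + weight f v := by simp [weight]

lemma weight_one_eq_length (w : Word) : weight 1 w = w.length := by
  induction w with
  | nil => rfl
  | cons j v ih => simp [ih, add_comm]

section Triangularity

variable (f : Fin 2 → ℕ) {K : ℕ}

lemma sh_apply_eq_zero (c : Word → R) {e : Word → R} (he : ∀ u, weight f u < K → e u = 0)
    (v : Word) (hv : weight f v < K) : sh c e v = 0 := by
  induction v generalizing c e K with
  | nil => simp [he [] hv]
  | cons j v ih =>
    rw [weight_cons] at hv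
    rw [sh_cons, ih _ he (by omega), ih (K := K - f j) (e := lshift j e) c
      (fun u hu => he (j :: u) (by rw [weight_cons]; omega)) (by omega), add_zero]

lemma phiLetter_apply_eq_zero (hf : f 1 ≤ f 0) (d : Word → R) (i : Fin 2) {e : Word → R}
    (he : ∀ u, weight f u < K → e u = 0) (w : Word) (hw : weight f w < K + f i) :
    phiLetter d i e w = 0 := by
  cases w with
  | nil => simp
  | cons j v =>
    rw [weight_cons] at hw
    rw [phiLetter_apply_cons]
    split_ifs with hji hsh hsh
    · obtain ⟨rfl, rfl⟩ := hsh; simp at hji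
    · subst hji; rw [he v (by omega), add_zero]
    · obtain ⟨rfl, rfl⟩ := hsh; rw [sh_apply_eq_zero f d he v (by omega), add_zero]
    · simp

-- `φ_d(x1)` can put the letter `x0` where `ξ` has `x1`, hence `f 1 ≤ f 0`.
lemma phi_one_apply_eq_zero (hf : f 1 ≤ f 0) (d : Word → R) (ξ : Word) {w : Word}
    (hw : weight f w < weight f ξ) : phi d ξ one w = 0 := by
  induction ξ generalizing w with
  | nil => simp at hw
  | cons i ξ ih =>
    exact phiLetter_apply_eq_zero f hf d i (K := weight f ξ) (fun u hu => ih hu) w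
      (by simpa [add_comm] using hw)

lemma phi_one_apply_of_weight_eq (hf : f 1 < f 0) (d : Word → R) (ξ : Word) {w : Word}
    (hw : weight f w = weight f ξ) : phi d ξ one w = ind ξ w := by
  induction ξ generalizing w with
  | nil => rfl
  | cons i ξ ih =>
    cases w with
    | nil => simp [ind]
    | cons j v =>
      rw [phi_cons, phiLetter_apply_cons]
      rw [weight_cons, weight_cons] at hw
      by_cases hji : j = i
      · subst hji
        rw [if_pos rfl, ih (by omega)]
        fin_cases j <;> simp [ind]
      · rw [if_neg hji, zero_add, show ind (i :: ξ) (j :: v) = (0 : R) by simp [ind, hji]]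
        split_ifs with h
        · obtain ⟨rfl, rfl⟩ := h
          exact sh_apply_eq_zero f d (fun u hu => phi_one_apply_eq_zero f hf.le d ξ hu) v
            (by omega)
        · rfl

end Triangularity

lemma phi_one_apply_eq_zero_of_length_lt (d : Word → R) {ξ w : Word}
    (h : w.length < ξ.length) : phi d ξ one w = 0 :=
  phi_one_apply_eq_zero 1 le_rfl d ξ (by simpa [weight_one_eq_length] using h)

def wordsUpTo (n : ℕ) : Finset Word := (Finset.range (n + 1)).biUnion wordsLen

lemma mem_wordsUpTo {n : ℕ} {ξ : Word} : ξ ∈ wordsUpTo n ↔ ξ.length ≤ n := by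
  simp only [wordsUpTo, wordsLen, Finset.mem_biUnion, Finset.mem_range, Finset.mem_image,
    Finset.mem_univ, true_and, Nat.lt_succ_iff]
  constructor
  · rintro ⟨k, hk, g, rfl⟩
    simpa using hk
  · exact fun h => ⟨_, h, ξ.get, List.ofFn_get ξ⟩

lemma wordsUpTo_succ (n : ℕ) : wordsUpTo (n + 1) =
    insert [] ((wordsUpTo n).image (List.cons 0) ∪ (wordsUpTo n).image (List.cons 1)) := by
  ext ξ
  rcases ξ with _ | ⟨j, v⟩
  · simp [mem_wordsUpTo]
  · fin_cases j <;> simp [mem_wordsUpTo]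

lemma sum_wordsUpTo_succ {M : Type*} [AddCommMonoid M] (n : ℕ) (g : Word → M) :
    ∑ ξ ∈ wordsUpTo (n + 1), g ξ =
      g [] + ∑ ξ ∈ wordsUpTo n, g (0 :: ξ) + ∑ ξ ∈ wordsUpTo n, g (1 :: ξ) := by
  have hdisj : Disjoint ((wordsUpTo n).image (List.cons (0 : Fin 2)))
      ((wordsUpTo n).image (List.cons 1)) := by
    simp [Finset.disjoint_left]
  rw [wordsUpTo_succ, Finset.sum_insert (by simp), Finset.sum_union hdisj,
    Finset.sum_image (by simp), Finset.sum_image (by simp), add_assoc]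

-- `Paper.mcomp` with the sum cut to `|ξ| ≤ |w|` (see `mcomp_eq`).
def mcomp (c d : Word → R) : Word → R := fun w =>
  ∑ ξ ∈ wordsUpTo w.length, c ξ * phi d ξ one w

def gop (c d : Word → R) : Word → R := d + mcomp c d

section Composition

lemma mcomp_apply_eq_sum {n : ℕ} (c d : Word → R) {w : Word} (hw : w.length ≤ n) :
    mcomp c d w = ∑ ξ ∈ wordsUpTo n, c ξ * phi d ξ one w := by
  refine Finset.sum_subset (fun ξ hξ => ?_) fun ξ _ hξ => ?_
  · rw [mem_wordsUpTo] at hξ ⊢; omega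
  · rw [mem_wordsUpTo, not_le] at hξ
    rw [phi_one_apply_eq_zero_of_length_lt d (by omega), mul_zero]

@[simp] lemma mcomp_nil (c d : Word → R) : mcomp c d [] = c [] := by
  simp [mcomp, wordsUpTo, wordsLen]

lemma mcomp_cons_one (c d : Word → R) (w : Word) :
    mcomp c d (1 :: w) = mcomp (lshift 1 c) d w := by
  rw [mcomp, List.length_cons, sum_wordsUpTo_succ]
  simp [phiLetter_apply_cons, mcomp]

lemma mcomp_cons_zero (c d : Word → R) (w : Word) :
    mcomp c d (0 :: w) = mcomp (lshift 0 c) d w + sh d (mcomp (lshift 1 c) d) w := by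
  have hsh : ∑ ξ ∈ wordsUpTo w.length, c (1 :: ξ) * sh d (phi d ξ one) w
      = sh d (∑ ξ ∈ wordsUpTo w.length, c (1 :: ξ) • phi d ξ one) w := by
    simp [sh_sum_right, sh_smul_right]
  rw [mcomp, List.length_cons, sum_wordsUpTo_succ]
  simp only [phi_nil, one_cons, mul_zero, zero_add, phi_cons, phiLetter_apply_cons, ↓reduceIte,
    add_zero, and_self, zero_ne_one, and_true]
  rw [hsh]
  congr 1
  exact sh_apply_congr_right d w fun v hv => by
    simp [mcomp_apply_eq_sum (lshift 1 c) d hv]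

lemma lshift_one_mcomp (c d : Word → R) : lshift 1 (mcomp c d) = mcomp (lshift 1 c) d :=
  funext (mcomp_cons_one c d)

lemma lshift_zero_mcomp (c d : Word → R) :
    lshift 0 (mcomp c d) = mcomp (lshift 0 c) d + sh d (mcomp (lshift 1 c) d) :=
  funext (mcomp_cons_zero c d)

lemma mcomp_add_left (c c' d : Word → R) : mcomp (c + c') d = mcomp c d + mcomp c' d := by
  funext w
  simp [mcomp, add_mul, Finset.sum_add_distrib]

lemma mcomp_zero_left (d : Word → R) : mcomp 0 d = 0 := by
  funext w
  simp [mcomp]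

lemma mcomp_zero_right (c : Word → R) : mcomp c 0 = c := by
  funext w
  induction w generalizing c with
  | nil => simp
  | cons i w ih =>
    obtain rfl | rfl : i = 0 ∨ i = 1 := by omega
    · simp [mcomp_cons_zero, ih, sh_zero_left]
    · simp [mcomp_cons_one, ih]

lemma mcomp_sh (c c' d : Word → R) : mcomp (sh c c') d = sh (mcomp c d) (mcomp c' d) := by
  funext w
  induction w using induction_on_length generalizing c c' with
  | nil => simp
  | cons i w ih =>
    obtain rfl | rfl : i = 0 ∨ i = 1 := by omega
    · have ih_sh : ∀ a a', sh d (mcomp (sh a a') d) w = sh d (sh (mcomp a d) (mcomp a' d)) w :=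
        fun a a' => sh_apply_congr_right d w fun v hv => ih v hv a a'
      simp only [mcomp_cons_zero, sh_cons, lshift_zero_mcomp, lshift_sh, mcomp_add_left,
        sh_add_left, sh_add_right, Pi.add_apply, ih w le_rfl, ih_sh, sh_assoc, sh_left_comm _ d]
      ring
    · simp only [mcomp_cons_one, sh_cons, lshift_one_mcomp, lshift_sh, mcomp_add_left,
        Pi.add_apply, ih w le_rfl]

lemma mcomp_mcomp (c d e : Word → R) : mcomp (mcomp c d) e = mcomp c (gop d e) := by
  funext w
  induction w using induction_on_length generalizing c with
  | nil => simp
  | cons i w ih =>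
    obtain rfl | rfl : i = 0 ∨ i = 1 := by omega
    · have ih_sh : ∀ a b, sh a (mcomp (mcomp b d) e) w = sh a (mcomp b (gop d e)) w :=
        fun a b => sh_apply_congr_right a w fun v hv => ih v hv b
      simp only [mcomp_cons_zero, lshift_zero_mcomp, lshift_one_mcomp, mcomp_add_left,
        Pi.add_apply, ih w le_rfl, mcomp_sh, ih_sh, gop, sh_add_left]
      ring
    · simp only [mcomp_cons_one, lshift_one_mcomp, ih w le_rfl]

lemma gop_assoc (c d e : Word → R) : gop (gop c d) e = gop c (gop d e) := by
  simp only [gop, mcomp_add_left, mcomp_mcomp, add_assoc]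

lemma zero_gop (c : Word → R) : gop 0 c = c := by
  simp [gop, mcomp_zero_left]

lemma gop_zero (c : Word → R) : gop c 0 = c := by
  simp [gop, mcomp_zero_right]

lemma gop_apply_x0 (c d : Word → R) : gop c d [0] = d [0] + c [0] + d [] * c [1] := by
  simp [gop, mcomp_cons_zero, add_assoc]

end Composition

section Map

variable {S : Type*} [CommSemiring S] (f : R →+* S)

lemma map_comp_lconcat (i : Fin 2) (c : Word → R) : f ∘ lconcat i c = lconcat i (f ∘ c) := by
  funext w
  cases w <;> simp [apply_ite f]

lemma map_comp_sh (c d : Word → R) : f ∘ sh c d = sh (f ∘ c) (f ∘ d) := by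
  funext w
  induction w generalizing c d with
  | nil => simp
  | cons i w ih =>
    simp only [Function.comp_apply, sh_cons, map_add]
    exact congrArg₂ (· + ·) (ih _ _) (ih _ _)

lemma map_comp_phi (d : Word → R) (ξ : Word) (e : Word → R) :
    f ∘ phi d ξ e = phi (f ∘ d) ξ (f ∘ e) := by
  induction ξ with
  | nil => rfl
  | cons i ξ ih =>
    obtain rfl | rfl : i = 0 ∨ i = 1 := by omega
    · simp only [phi_cons, phiLetter_zero, map_comp_lconcat, ih]
    · simp only [phi_cons, phiLetter_one, ← ih, ← map_comp_sh, ← map_comp_lconcat]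
      funext w
      simp

end Map

end WordSeries

namespace OutputFeedback

open Paper hiding lshift lconcat sh ind one phiLetter phi mcomp gop
open WordSeries Algebra.TensorProduct

lemma sh_eq (c d : Series) : Paper.sh c d = sh c d := by
  funext w
  induction w generalizing c d with
  | nil => rfl
  | cons i w ih => exact congrArg₂ (· + ·) (ih _ _) (ih _ _)

lemma phi_eq (d : Series) (ξ : Word) (e : Series) : Paper.phi d ξ e = phi d ξ e := by
  induction ξ with
  | nil => rfl
  | cons i ξ ih =>
    simp only [Paper.phi, Paper.phiLetter, phi_cons, phiLetter, ih, sh_eq]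
    rfl

lemma mcomp_eq (c d : Series) : Paper.mcomp c d = mcomp c d := by
  funext w
  show ∑' ξ, c ξ * Paper.phi d ξ Paper.one w = _
  rw [tsum_eq_sum (s := wordsUpTo w.length) fun ξ hξ => ?_]
  · simp only [mcomp, phi_eq]
    rfl
  rw [mem_wordsUpTo, not_le] at hξ
  rw [phi_eq, show Paper.one = one from rfl, phi_one_apply_eq_zero_of_length_lt d hξ, mul_zero]

lemma evalS_aw (c : Series) (η : Word) : evalS c (aw η) = c η := MvPolynomial.aeval_X c η

lemma ext_evalS {p q : H} (h : ∀ c : Series, evalS c p = evalS c q) : p = q :=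
  MvPolynomial.funext h

def deltaCoeff (ξ η : Word) : H := phi aw ξ one η

lemma evalS_deltaCoeff (d : Series) (ξ η : Word) :
    evalS d (deltaCoeff ξ η) = phi d ξ one η := by
  have hd : (evalS d : H →+* ℝ) ∘ aw = d := funext (evalS_aw d)
  have hone : (evalS d : H →+* ℝ) ∘ one = one := by
    funext w
    cases w <;> simp
  have := congrFun (map_comp_phi (evalS d : H →+* ℝ) aw ξ one) η
  rwa [hd, hone] at this

def coproductGen (η : Word) : H ⊗[ℝ] H :=
  ∑ ξ ∈ wordsUpTo η.length, aw ξ ⊗ₜ deltaCoeff ξ η + 1 ⊗ₜ aw η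

def coproduct : H →ₐ[ℝ] H ⊗[ℝ] H := MvPolynomial.aeval coproductGen

lemma coproduct_aw (η : Word) : coproduct (aw η) = coproductGen η := MvPolynomial.aeval_X _ _

section Bialgebra

def evalPairHom (c d : Series) : H ⊗[ℝ] H →ₐ[ℝ] ℝ := productMap (evalS c) (evalS d)

def evalTripleHom (c d e : Series) : H ⊗[ℝ] (H ⊗[ℝ] H) →ₐ[ℝ] ℝ :=
  productMap (evalS c) (evalPairHom d e)

lemma ext_evalTripleHom {t t' : H ⊗[ℝ] (H ⊗[ℝ] H)}
    (h : ∀ c d e, evalTripleHom c d e t = evalTripleHom c d e t') : t = t' :=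
  MvPolynomial.tensor_ext_of_aeval₃ h

lemma evalPair_eq_evalPairHom (c d : Series) (t : H ⊗[ℝ] H) :
    evalPair c d t = evalPairHom c d t := by
  induction t with
  | zero => simp
  | tmul p q => simp [evalPair, evalPairHom]
  | add x y hx hy => rw [map_add, map_add, hx, hy]

lemma evalPairHom_comp_coproduct (c d : Series) :
    (evalPairHom c d).comp coproduct = evalS (gop c d) := by
  refine MvPolynomial.algHom_ext fun η => ?_
  show evalPairHom c d (coproduct (aw η)) = evalS (gop c d) (aw η)
  simp [coproduct_aw, coproductGen, evalPairHom, evalS_deltaCoeff, evalS_aw, gop, mcomp,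
    add_comm]

lemma evalPairHom_coproduct (c d : Series) (p : H) :
    evalPairHom c d (coproduct p) = evalS (gop c d) p :=
  AlgHom.congr_fun (evalPairHom_comp_coproduct c d) p

lemma isFBCoproduct_coproduct : IsFBCoproduct coproduct := by
  intro η c d
  rw [evalPair_eq_evalPairHom, evalPairHom_coproduct, evalS_aw, mcomp_eq, gop, Pi.add_apply,
    add_comm]

lemma evalTripleHom_assoc_tmul (c d e : Series) (u : H ⊗[ℝ] H) (b : H) :
    evalTripleHom c d e (TensorProduct.assoc ℝ H H H (u ⊗ₜ b)) =
      evalPairHom c d u * evalS e b := by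
  induction u with
  | zero => simp
  | tmul x y => simp [evalTripleHom, evalPairHom, mul_assoc]
  | add x y hx hy => simp only [TensorProduct.add_tmul, map_add, hx, hy, add_mul]

lemma evalTripleHom_assoc_map_coproduct (c d e : Series) (t : H ⊗[ℝ] H) :
    evalTripleHom c d e (TensorProduct.assoc ℝ H H H
        (TensorProduct.map coproduct.toLinearMap LinearMap.id t)) =
      evalPairHom (gop c d) e t := by
  induction t with
  | zero => simp
  | tmul a b =>
    rw [TensorProduct.map_tmul, AlgHom.toLinearMap_apply, LinearMap.id_apply,
      evalTripleHom_assoc_tmul, evalPairHom_coproduct]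
    rfl
  | add x y hx hy => simp only [map_add, hx, hy]

lemma evalTripleHom_map_coproduct (c d e : Series) (t : H ⊗[ℝ] H) :
    evalTripleHom c d e (TensorProduct.map LinearMap.id coproduct.toLinearMap t) =
      evalPairHom c (gop d e) t := by
  induction t with
  | zero => simp
  | tmul a b =>
    rw [TensorProduct.map_tmul, AlgHom.toLinearMap_apply, LinearMap.id_apply, evalTripleHom,
      productMap_apply_tmul, evalPairHom_coproduct]
    rfl
  | add x y hx hy => simp only [map_add, hx, hy]

lemma coproduct_coassoc (p : H) :
    TensorProduct.assoc ℝ H H H (TensorProduct.map coproduct.toLinearMap LinearMap.id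
      (coproduct p)) = TensorProduct.map LinearMap.id coproduct.toLinearMap (coproduct p) :=
  ext_evalTripleHom fun c d e => by
    rw [evalTripleHom_assoc_map_coproduct, evalTripleHom_map_coproduct,
      evalPairHom_coproduct, evalPairHom_coproduct, gop_assoc]

lemma evalS_lid_map_counit (c : Series) (t : H ⊗[ℝ] H) :
    evalS c (TensorProduct.lid ℝ H (TensorProduct.map counit.toLinearMap LinearMap.id t)) =
      evalPairHom 0 c t := by
  induction t with
  | zero => simp
  | tmul a b => simp [evalPairHom, counit]
  | add x y hx hy => simp only [map_add, hx, hy]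

lemma evalS_rid_map_counit (c : Series) (t : H ⊗[ℝ] H) :
    evalS c (TensorProduct.rid ℝ H (TensorProduct.map LinearMap.id counit.toLinearMap t)) =
      evalPairHom c 0 t := by
  induction t with
  | zero => simp
  | tmul a b => simp [evalPairHom, counit, mul_comm]
  | add x y hx hy => simp only [map_add, hx, hy]

lemma coproduct_lid_counit (p : H) :
    TensorProduct.lid ℝ H (TensorProduct.map counit.toLinearMap LinearMap.id (coproduct p)) =
      p :=
  ext_evalS fun c => by rw [evalS_lid_map_counit, evalPairHom_coproduct, zero_gop]

lemma coproduct_rid_counit (p : H) :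
    TensorProduct.rid ℝ H (TensorProduct.map LinearMap.id counit.toLinearMap (coproduct p)) =
      p :=
  ext_evalS fun c => by rw [evalS_rid_map_counit, evalPairHom_coproduct, gop_zero]

lemma evalPairHom_comm (c d : Series) (t : H ⊗[ℝ] H) :
    evalPairHom c d (TensorProduct.comm ℝ H H t) = evalPairHom d c t := by
  induction t with
  | zero => simp
  | tmul a b => simp [evalPairHom, mul_comm]
  | add x y hx hy => simp only [map_add, hx, hy]

lemma coproduct_not_cocomm :
    TensorProduct.comm ℝ H H (coproduct (aw [0])) ≠ coproduct (aw [0]) := by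
  intro h
  have key := congrArg (evalPairHom (ind [1]) (ind [])) h
  rw [evalPairHom_comm, evalPairHom_coproduct, evalPairHom_coproduct, evalS_aw, evalS_aw,
    gop_apply_x0, gop_apply_x0] at key
  simp [ind] at key

end Bialgebra

section Grading

open MvPolynomial hiding counit

def letterWeight (i : Fin 2) : ℕ := if i = 0 then 2 else 1

lemma letterWeight_one_lt : letterWeight 1 < letterWeight 0 := by decide

lemma degW_eq_weight_add_one (η : Word) : degW η = weight letterWeight η + 1 := by
  induction η with
  | nil => rfl
  | cons i η ih =>
    obtain rfl | rfl : i = 0 ∨ i = 1 := by omega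
    all_goals simp [degW, letterWeight] at ih ⊢; omega

lemma isWeightedHomogeneous_natCast_iff {p : H} {n : ℕ} :
    p.IsWeightedHomogeneous (fun η => (degW η : ℤ)) n ↔ p.IsWeightedHomogeneous degW n := by
  have hw : ∀ m : Word →₀ ℕ,
      Finsupp.weight (fun η => (degW η : ℤ)) m = (Finsupp.weight degW m : ℤ) := by
    intro m
    simp [Finsupp.weight_apply, Finsupp.sum]
  simp only [IsWeightedHomogeneous, hw, Nat.cast_inj]

def IsHomogeneousSeries (a : ℤ) (c : Word → H) : Prop :=
  ∀ v, (c v).IsWeightedHomogeneous (fun η => (degW η : ℤ)) (weight letterWeight v + a)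

lemma isHomogeneousSeries_aw : IsHomogeneousSeries 1 aw := fun v => by
  have := isWeightedHomogeneous_X ℝ (fun η => (degW η : ℤ)) v
  rwa [degW_eq_weight_add_one, Nat.cast_add, Nat.cast_one] at this

lemma isHomogeneousSeries_one : IsHomogeneousSeries 0 (one : Word → H) := by
  rintro (_ | ⟨j, v⟩)
  · simpa using isWeightedHomogeneous_one ℝ _
  · simpa using isWeightedHomogeneous_zero ℝ _ _

namespace IsHomogeneousSeries

variable {a b : ℤ} {c e : Word → H}

lemma add (hc : IsHomogeneousSeries a c) (he : IsHomogeneousSeries a e) :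
    IsHomogeneousSeries a (c + e) := fun v => (hc v).add (he v)

lemma lshift (hc : IsHomogeneousSeries a c) (i : Fin 2) :
    IsHomogeneousSeries (a + letterWeight i) (lshift i c) := fun v => by
  have h := hc (i :: v)
  rw [weight_cons, Nat.cast_add] at h
  rwa [show (weight letterWeight v : ℤ) + (a + letterWeight i) =
    letterWeight i + weight letterWeight v + a by ring]

lemma lconcat (hc : IsHomogeneousSeries a c) (i : Fin 2) :
    IsHomogeneousSeries (a - letterWeight i) (lconcat i c) := by
  rintro (_ | ⟨j, v⟩)
  · exact isWeightedHomogeneous_zero ℝ _ _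
  · by_cases hj : j = i
    · subst hj
      rw [lconcat_cons, if_pos rfl, weight_cons, Nat.cast_add,
        show (letterWeight j + weight letterWeight v : ℤ) + (a - letterWeight j) =
          weight letterWeight v + a by ring]
      exact hc v
    · simpa [hj] using isWeightedHomogeneous_zero ℝ _ _

lemma sh (hc : IsHomogeneousSeries a c) (he : IsHomogeneousSeries b e) :
    IsHomogeneousSeries (a + b) (sh c e) := by
  intro v
  induction v generalizing c e a b with
  | nil => simpa using (hc []).mul (he [])
  | cons j v ih =>
    refine IsWeightedHomogeneous.add ?_ ?_
    · convert ih (hc.lshift j) he using 1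
      simp only [weight_cons, Nat.cast_add]
      ring
    · convert ih hc (he.lshift j) using 1
      simp only [weight_cons, Nat.cast_add]
      ring

lemma phiLetter (he : IsHomogeneousSeries a e) (i : Fin 2) :
    IsHomogeneousSeries (a - letterWeight i) (phiLetter aw i e) := by
  obtain rfl | rfl : i = 0 ∨ i = 1 := by omega
  · rw [phiLetter_zero]
    exact he.lconcat 0
  · rw [phiLetter_one]
    refine (he.lconcat 1).add ?_
    have h := (isHomogeneousSeries_aw.sh he).lconcat 0
    rwa [show (1 + a) - letterWeight 0 = a - letterWeight 1 by simp [letterWeight]; ring] at h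

lemma phi (he : IsHomogeneousSeries a e) (ξ : Word) :
    IsHomogeneousSeries (a - weight letterWeight ξ) (phi aw ξ e) := by
  induction ξ with
  | nil => simpa using he
  | cons i ξ ih =>
    have h := ih.phiLetter i
    rwa [show a - weight letterWeight ξ - letterWeight i = a - weight letterWeight (i :: ξ) by
      simp only [weight_cons, Nat.cast_add]; ring] at h

end IsHomogeneousSeries

lemma isWeightedHomogeneous_deltaCoeff {ξ η : Word} (h : degW ξ ≤ degW η) :
    (deltaCoeff ξ η).IsWeightedHomogeneous degW (degW η - degW ξ) := by
  have hξη : (deltaCoeff ξ η).IsWeightedHomogeneous (fun η => (degW η : ℤ))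
      (weight letterWeight η + (0 - weight letterWeight ξ)) :=
    isHomogeneousSeries_one.phi ξ η
  rw [← isWeightedHomogeneous_natCast_iff]
  rw [degW_eq_weight_add_one, degW_eq_weight_add_one] at h ⊢
  rwa [show ((weight letterWeight η + 1 - (weight letterWeight ξ + 1) : ℕ) : ℤ) =
    weight letterWeight η + (0 - weight letterWeight ξ) by omega]

lemma deltaCoeff_eq_zero_of_lt {ξ η : Word} (h : degW η < degW ξ) : deltaCoeff ξ η = 0 :=
  ext_evalS fun c => by
    rw [evalS_deltaCoeff, map_zero]
    exact phi_one_apply_eq_zero letterWeight letterWeight_one_lt.le c ξ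
      (by simpa [degW_eq_weight_add_one] using h)

lemma deltaCoeff_of_degW_eq {ξ η : Word} (h : degW ξ = degW η) :
    deltaCoeff ξ η = if η = ξ then 1 else 0 :=
  ext_evalS fun c => by
    rw [evalS_deltaCoeff, phi_one_apply_of_weight_eq letterWeight letterWeight_one_lt c ξ
      (by simpa [degW_eq_weight_add_one] using h.symm)]
    split_ifs <;> simp [ind, *]

def tensorGraded (n : ℕ) : Submodule ℝ (H ⊗[ℝ] H) :=
  ⨆ (pq : ℕ × ℕ) (_ : pq.1 + pq.2 = n),
    LinearMap.range (TensorProduct.map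
      (weightedHomogeneousSubmodule ℝ degW pq.1).subtype
      (weightedHomogeneousSubmodule ℝ degW pq.2).subtype)

lemma tmul_mem_tensorGraded {p q : H} {a b : ℕ} (hp : p.IsWeightedHomogeneous degW a)
    (hq : q.IsWeightedHomogeneous degW b) : p ⊗ₜ[ℝ] q ∈ tensorGraded (a + b) :=
  Submodule.mem_iSup_of_mem (a, b) <| Submodule.mem_iSup_of_mem rfl
    ⟨(⟨p, hp⟩ : weightedHomogeneousSubmodule ℝ degW a) ⊗ₜ ⟨q, hq⟩, rfl⟩

lemma range_map_subtype_mul_le (a b a' b' : ℕ) :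
    LinearMap.range (TensorProduct.map (weightedHomogeneousSubmodule ℝ degW a).subtype
        (weightedHomogeneousSubmodule ℝ degW b).subtype) *
      LinearMap.range (TensorProduct.map (weightedHomogeneousSubmodule ℝ degW a').subtype
        (weightedHomogeneousSubmodule ℝ degW b').subtype) ≤
    tensorGraded (a + b + (a' + b')) := by
  rw [TensorProduct.range_map_eq_span_tmul, TensorProduct.range_map_eq_span_tmul,
    Submodule.span_mul_span, Submodule.span_le, add_add_add_comm]
  rintro _ ⟨_, ⟨x, y, rfl⟩, _, ⟨x', y', rfl⟩, rfl⟩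
  simp only [Submodule.subtype_apply, Algebra.TensorProduct.tmul_mul_tmul]
  exact tmul_mem_tensorGraded (x.2.mul x'.2) (y.2.mul y'.2)

lemma tensorGraded_mul_le (m n : ℕ) :
    tensorGraded m * tensorGraded n ≤ tensorGraded (m + n) := by
  simp only [tensorGraded, Submodule.iSup_mul, Submodule.mul_iSup, iSup_le_iff]
  intro pq hpq pq' hpq'
  subst hpq hpq'
  exact range_map_subtype_mul_le ..

lemma one_mem_tensorGraded : (1 : H ⊗[ℝ] H) ∈ tensorGraded 0 := by
  have h := tmul_mem_tensorGraded (isWeightedHomogeneous_one ℝ degW)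
    (isWeightedHomogeneous_one ℝ degW)
  rwa [zero_add, ← Algebra.TensorProduct.one_def] at h

instance : SetLike.GradedMonoid tensorGraded where
  one_mem := one_mem_tensorGraded
  mul_mem m n _ _ hx hy := tensorGraded_mul_le m n (Submodule.mul_mem_mul hx hy)

lemma coproduct_aw_mem (η : Word) : coproduct (aw η) ∈ tensorGraded (degW η) := by
  rw [coproduct_aw, coproductGen]
  refine add_mem (Submodule.sum_mem _ fun ξ _ => ?_) ?_
  · rcases lt_or_ge (degW η) (degW ξ) with h | h
    · rw [deltaCoeff_eq_zero_of_lt h, TensorProduct.tmul_zero]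
      exact zero_mem _
    · have := tmul_mem_tensorGraded (isWeightedHomogeneous_X ℝ degW ξ)
        (isWeightedHomogeneous_deltaCoeff h)
      rwa [Nat.add_sub_cancel' h] at this
  · have := tmul_mem_tensorGraded (isWeightedHomogeneous_one ℝ degW)
      (isWeightedHomogeneous_X ℝ degW η)
    rwa [zero_add] at this

lemma coproduct_mem {n : ℕ} {p : H} (hp : p.IsWeightedHomogeneous degW n) :
    coproduct p ∈ tensorGraded n :=
  aeval_mem_of_isWeightedHomogeneous tensorGraded coproduct coproduct_aw_mem hp

end Grading

section Antipode

def antipodeGen (η : Word) : H :=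
  -aw η - ∑ ξ ∈ ((wordsUpTo η.length).filter fun ξ => degW ξ < degW η).attach,
    antipodeGen ξ * deltaCoeff ξ η
termination_by degW η
decreasing_by exact (Finset.mem_filter.mp ξ.2).2

lemma antipodeGen_eq (η : Word) : antipodeGen η = -aw η -
    ∑ ξ ∈ (wordsUpTo η.length).filter (fun ξ => degW ξ < degW η),
      antipodeGen ξ * deltaCoeff ξ η := by
  rw [antipodeGen, Finset.sum_attach _ fun ξ => antipodeGen ξ * deltaCoeff ξ η]

lemma sum_antipodeGen_mul_deltaCoeff (η : Word) :
    ∑ ξ ∈ wordsUpTo η.length, antipodeGen ξ * deltaCoeff ξ η = -aw η := by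
  have hdiag : ∑ ξ ∈ (wordsUpTo η.length).filter (fun ξ => ¬ degW ξ < degW η),
      antipodeGen ξ * deltaCoeff ξ η = antipodeGen η := by
    rw [Finset.sum_eq_single_of_mem η (by simp [mem_wordsUpTo]),
      deltaCoeff_of_degW_eq rfl, if_pos rfl, mul_one]
    intro ξ hξ hne
    rw [Finset.mem_filter, not_lt] at hξ
    rcases hξ.2.lt_or_eq with h | h
    · rw [deltaCoeff_eq_zero_of_lt h, mul_zero]
    · rw [deltaCoeff_of_degW_eq h.symm, if_neg (Ne.symm hne), mul_zero]
  rw [← Finset.sum_filter_add_sum_filter_not _ fun ξ => degW ξ < degW η, hdiag,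
    antipodeGen_eq η]
  ring

def antipode : H →ₐ[ℝ] H := MvPolynomial.aeval antipodeGen

def gopInv (c : Series) : Series := fun η => evalS c (antipodeGen η)

lemma evalS_antipode (c : Series) (p : H) : evalS c (antipode p) = evalS (gopInv c) p := by
  rw [← AlgHom.comp_apply]
  congr 1
  exact MvPolynomial.algHom_ext fun η => by simp [antipode, gopInv, evalS]

lemma gopInv_gop (c : Series) : gop (gopInv c) c = 0 := by
  funext η
  have h := congrArg (evalS c) (sum_antipodeGen_mul_deltaCoeff η)
  simp only [map_sum, map_mul, map_neg, evalS_aw, evalS_deltaCoeff] at h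
  simp only [gop, mcomp, gopInv, Pi.add_apply, Pi.zero_apply, h, add_neg_cancel]

lemma gop_gopInv (c : Series) : gop c (gopInv c) = 0 := by
  have hc : gopInv (gopInv c) = c :=
    calc gopInv (gopInv c) = gop (gopInv (gopInv c)) (gop (gopInv c) c) := by
          rw [gopInv_gop, gop_zero]
      _ = c := by rw [← gop_assoc, gopInv_gop, zero_gop]
  simpa [hc] using gopInv_gop (gopInv c)

lemma evalS_mul'_map_antipode_id (c : Series) (t : H ⊗[ℝ] H) :
    evalS c (LinearMap.mul' ℝ H (TensorProduct.map antipode.toLinearMap LinearMap.id t)) =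
      evalPairHom (gopInv c) c t := by
  induction t with
  | zero => simp
  | tmul a b => simp [evalPairHom, evalS_antipode]
  | add x y hx hy => simp only [map_add, hx, hy]

lemma evalS_mul'_map_id_antipode (c : Series) (t : H ⊗[ℝ] H) :
    evalS c (LinearMap.mul' ℝ H (TensorProduct.map LinearMap.id antipode.toLinearMap t)) =
      evalPairHom c (gopInv c) t := by
  induction t with
  | zero => simp
  | tmul a b => simp [evalPairHom, evalS_antipode]
  | add x y hx hy => simp only [map_add, hx, hy]

lemma isAntipode_antipode : IsAntipode coproduct antipode.toLinearMap := by
  refine ⟨fun p => ext_evalS fun c => ?_, fun p => ext_evalS fun c => ?_⟩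
  · rw [evalS_mul'_map_antipode_id, evalPairHom_coproduct, gopInv_gop]
    simp [counit]
  · rw [evalS_mul'_map_id_antipode, evalPairHom_coproduct, gop_gopInv]
    simp [counit]

end Antipode

end OutputFeedback

open Paper in
/-- The algebra `H` of coordinate functions with product `μ`, full
coproduct `Δ` (the algebra morphism determined by `Δ a_η = Δ̃ a_η + 1 ⊗ a_η`,
`Δ̃ a_η (c,d) = ⟨c ∘̃ d, η⟩`), counit `ε` and antipode `S` is a connected graded
commutative non-cocommutative Hopf algebra, graded by
`deg(a_η) = 2|η|_{x0} + |η|_{x1} + 1` extended multiplicatively with `deg(1) = 0`. -/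
theorem output_feedback_hopf_algebra :
    -- `H` is commutative
    (∀ p q : H, p * q = q * p) ∧
    -- the product is graded and `H` is connected
    (∀ (m n : ℕ) (p q : H), p.IsWeightedHomogeneous degW m → q.IsWeightedHomogeneous degW n →
        (p * q).IsWeightedHomogeneous degW (m + n)) ∧
    (MvPolynomial.weightedHomogeneousSubmodule ℝ degW 0 = Submodule.span ℝ {(1 : H)}) ∧
    -- the full coproduct `Δ` (an algebra morphism) exists, is coassociative and counital,
    -- is graded, non-cocommutative, and admits an antipode `S`
    (∃ Δ : H →ₐ[ℝ] (H ⊗[ℝ] H), IsFBCoproduct Δ ∧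
      (∀ p : H,
        TensorProduct.assoc ℝ H H H
            (TensorProduct.map Δ.toLinearMap LinearMap.id (Δ p)) =
          TensorProduct.map LinearMap.id Δ.toLinearMap (Δ p)) ∧
      (∀ p : H,
        TensorProduct.lid ℝ H
            (TensorProduct.map counit.toLinearMap LinearMap.id (Δ p)) = p) ∧
      (∀ p : H,
        TensorProduct.rid ℝ H
            (TensorProduct.map LinearMap.id counit.toLinearMap (Δ p)) = p) ∧
      (∀ (n : ℕ) (p : H), p.IsWeightedHomogeneous degW n →
        Δ p ∈ ⨆ (pq : ℕ × ℕ) (_ : pq.1 + pq.2 = n),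
          LinearMap.range (TensorProduct.map
            (MvPolynomial.weightedHomogeneousSubmodule ℝ degW pq.1).subtype
            (MvPolynomial.weightedHomogeneousSubmodule ℝ degW pq.2).subtype)) ∧
      (∃ p : H, TensorProduct.comm ℝ H H (Δ p) ≠ Δ p) ∧
      (∃ S : H →ₗ[ℝ] H, IsAntipode Δ S)) := by
  exact ⟨mul_comm, fun _ _ _ _ hp hq => hp.mul hq,
    MvPolynomial.weightedHomogeneousSubmodule_zero_eq_span_one fun η => by simp [degW],
    OutputFeedback.coproduct, OutputFeedback.isFBCoproduct_coproduct,
    OutputFeedback.coproduct_coassoc, OutputFeedback.coproduct_lid_counit,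
    OutputFeedback.coproduct_rid_counit, fun _ _ => OutputFeedback.coproduct_mem,
    ⟨aw [0], OutputFeedback.coproduct_not_cocomm⟩,
    OutputFeedback.antipode.toLinearMap, OutputFeedback.isAntipode_antipode⟩
end
end

section
/- For every c ∈ ℝ⟨⟨X⟩⟩ and every word η ∈ X*, the group inverse c_δ^{∘−1} = δ + c^{∘−1} of c_δ = δ + c in the output feedback group satisfies ⟨c^{∘−1}, η⟩ = S a_η (c), where S is the antipode of the output feedback Hopf algebra H and S a_η (c) denotes the pointwise evaluation at c of the polynomial S a_η in coordinate functions. -/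
open scoped TensorProduct

noncomputable section

namespace Paper

/-! ### Support lemmas -/

lemma shuffle_supp : ∀ (w : Word) (m : ℕ) (d e : Series),
    (∀ v : Word, v.length < m → e v = 0) → w.length < m → shuffleFn d e w = 0
  | [], _, d, e, he, hw => by
      simp only [shuffleFn, he [] hw, mul_zero]
  | i :: w, m, d, e, he, hw => by
      simp only [List.length_cons] at hw
      simp only [shuffleFn]
      rw [shuffle_supp w m (lshift i d) e he (by omega),
        shuffle_supp w (m - 1) d (lshift i e)
          (fun v hv => he (i :: v) (by simp only [List.length_cons]; omega))
          (by omega), add_zero]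

lemma shuffle_diag : ∀ (w : Word) (d e : Series),
    (∀ v : Word, v.length < w.length → e v = 0) → shuffleFn d e w = d [] * e w
  | [], d, e, _ => rfl
  | i :: w, d, e, he => by
      simp only [shuffleFn]
      rw [shuffle_supp w (w.length + 1) (lshift i d) e
          (by simpa using he) (by omega),
        shuffle_diag w d (lshift i e)
          (fun v hv => he (i :: v) (by simp only [List.length_cons]; omega))]
      simp only [lshift, zero_add]

lemma phi_supp (c : Series) : ∀ (ξ v : Word), v.length < ξ.length → phi c ξ one v = 0
  | [], v, hv => absurd hv (by simp)
  | i :: ξ, v, hv => by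
      have IH : ∀ v : Word, v.length < ξ.length → phi c ξ one v = 0 := phi_supp c ξ
      show phiLetter c i (phi c ξ one) v = 0
      unfold phiLetter
      match v with
      | [] => split <;> simp [lconcat]
      | j :: v =>
        have hv' : v.length < ξ.length := by
          simp only [List.length_cons] at hv; omega
        have hsh : sh c (phi c ξ one) v = 0 := shuffle_supp v ξ.length c _ IH hv'
        split <;> simp [lconcat, IH v hv', hsh]

lemma phi_diag_self (c : Series) : ∀ η : Word, phi c η one η = 1
  | [] => by simp [phi, one, ind]
  | i :: η => by
      have IH := phi_diag_self c η
      show phiLetter c i (phi c η one) (i :: η) = 1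
      unfold phiLetter
      fin_cases i <;> simp [lconcat, IH]

lemma fin2_cases : ∀ k : Fin 2, k = 0 ∨ k = 1 := by decide

lemma phi_diag_lt (c : Series) : ∀ (ξ η : Word), ξ.length = η.length → ξ ≠ η →
    phi c ξ one η ≠ 0 → ξ.count 0 < η.count 0
  | [], [], _, hne, _ => absurd rfl hne
  | [], _ :: _, hlen, _, _ => by simp at hlen
  | _ :: _, [], hlen, _, _ => by simp at hlen
  | i :: ξ, j :: η, hlen, hne, hval => by
      have hl : ξ.length = η.length := by simpa using hlen
      have hdiag : sh c (phi c ξ one) η = c [] * phi c ξ one η :=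
        shuffle_diag η c _ (fun v hv => phi_supp c ξ v (by omega))
      have key : phi c ξ one η ≠ 0 → ξ.count 0 ≤ η.count 0 := by
        intro hv
        rcases eq_or_ne ξ η with rfl | hne'
        · exact le_rfl
        · exact le_of_lt (phi_diag_lt c ξ η hl hne' hv)
      replace hval : phiLetter c i (phi c ξ one) (j :: η) ≠ 0 := hval
      have hcount : ∀ (k : Fin 2) (l : Word), (k :: l).count 0 =
          l.count 0 + (if k = 0 then 1 else 0) := by
        intro k l
        rcases fin2_cases k with rfl | rfl <;> simp [List.count_cons]
      rw [hcount, hcount]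
      rcases fin2_cases i with rfl | rfl <;> rcases fin2_cases j with rfl | rfl
      · -- i = 0, j = 0
        rw [phiLetter, if_pos rfl] at hval
        replace hval : phi c ξ one η ≠ 0 := by
          simpa [lconcat] using hval
        have hne' : ξ ≠ η := fun h => hne (by rw [h])
        have := phi_diag_lt c ξ η hl hne' hval
        simp only [if_pos rfl]
        omega
      · -- i = 0, j = 1
        rw [phiLetter, if_pos rfl] at hval
        exact absurd (by simp [lconcat] : lconcat 0 (phi c ξ one) (1 :: η) = 0) hval
      · -- i = 1, j = 0
        rw [phiLetter, if_neg (by decide)] at hval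
        replace hval : phi c ξ one η ≠ 0 := by
          intro h
          apply hval
          simp [lconcat, hdiag, h]
        have := key hval
        rw [if_pos rfl, if_neg (by decide)]
        omega
      · -- i = 1, j = 1
        rw [phiLetter, if_neg (by decide)] at hval
        replace hval : phi c ξ one η ≠ 0 := by
          intro h
          apply hval
          simp [lconcat, hdiag, h]
        have hne' : ξ ≠ η := fun h => hne (by rw [h])
        have := phi_diag_lt c ξ η hl hne' hval
        omega

/-! ### The finite index sets -/

lemma mem_wordsLen_s7 {k : ℕ} {ξ : Word} : ξ ∈ wordsLen k ↔ ξ.length = k := by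
  constructor
  · intro h
    obtain ⟨f, -, rfl⟩ := Finset.mem_image.mp h
    simp
  · rintro rfl
    exact Finset.mem_image.mpr ⟨ξ.get, Finset.mem_univ _, List.ofFn_get ξ⟩

/-- The finite set of words of length at most `n`. -/
def Wle (n : ℕ) : Finset Word := (Finset.range (n + 1)).biUnion wordsLen

lemma mem_Wle {n : ℕ} {ξ : Word} : ξ ∈ Wle n ↔ ξ.length ≤ n := by
  simp only [Wle, Finset.mem_biUnion, Finset.mem_range, mem_wordsLen_s7]
  constructor
  · rintro ⟨k, hk, rfl⟩; omega
  · intro h; exact ⟨ξ.length, by omega, rfl⟩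

lemma mcomp_eq_sum (a b : Series) (η : Word) :
    mcomp a b η = ∑ ξ ∈ Wle η.length, a ξ * phi b ξ one η := by
  apply tsum_eq_sum
  intro ξ hξ
  have h : ¬ ξ.length ≤ η.length := fun h => hξ (mem_Wle.mpr h)
  rw [phi_supp b ξ η (by omega), mul_zero]

/-! ### `H`-valued series machinery: polynomial coefficients of `φ_d(ξ)(1)` -/

def shuffleFnH : (Word → H) → (Word → H) → Word → H
  | p, q, [] => p [] * q []
  | p, q, i :: w => shuffleFnH (fun v => p (i :: v)) q w + shuffleFnH p (fun v => q (i :: v)) w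

def lconcatH (i : Fin 2) (p : Word → H) : Word → H := fun w =>
  match w with
  | [] => 0
  | j :: v => if j = i then p v else 0

def phiLetterH (i : Fin 2) (e : Word → H) : Word → H :=
  if i = 0 then lconcatH 0 e else
    fun w => lconcatH 1 e w + lconcatH 0 (shuffleFnH (fun ν => aw ν) e) w

def phiH : Word → (Word → H) → Word → H
  | [], e => e
  | i :: ξ, e => phiLetterH i (phiH ξ e)

def oneH : Word → H := fun w => if w = [] then 1 else 0

/-- The polynomial `Q ξ η` with `(Q ξ η)(d) = ⟨φ_d(ξ)(1), η⟩`. -/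
def Q (ξ η : Word) : H := phiH ξ oneH η

lemma evalS_aw (d : Series) (ν : Word) : evalS d (aw ν) = d ν :=
  MvPolynomial.aeval_X d ν

lemma evalS_shuffleFnH (d : Series) : ∀ (w : Word) (p q : Word → H),
    evalS d (shuffleFnH p q w)
      = shuffleFn (fun v => evalS d (p v)) (fun v => evalS d (q v)) w
  | [], p, q => by simp only [shuffleFnH, shuffleFn, map_mul]
  | i :: w, p, q => by
      simp only [shuffleFnH, shuffleFn, map_add,
        evalS_shuffleFnH d w (fun v => p (i :: v)) q,
        evalS_shuffleFnH d w p (fun v => q (i :: v))]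
      rfl

lemma evalS_lconcatH (d : Series) (i : Fin 2) (p : Word → H) (w : Word) :
    evalS d (lconcatH i p w) = lconcat i (fun v => evalS d (p v)) w := by
  match w with
  | [] => simp [lconcatH, lconcat]
  | j :: v =>
      simp only [lconcatH, lconcat]
      split <;> simp

lemma evalS_phiH (d : Series) : ∀ (ξ : Word) (e : Word → H) (w : Word),
    evalS d (phiH ξ e w) = phi d ξ (fun v => evalS d (e v)) w
  | [], e, w => rfl
  | i :: ξ, e, w => by
      have IH : (fun v => evalS d (phiH ξ e v))
          = phi d ξ (fun v => evalS d (e v)) :=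
        funext fun v => evalS_phiH d ξ e v
      show evalS d (phiLetterH i (phiH ξ e) w)
          = phiLetter d i (phi d ξ (fun v => evalS d (e v))) w
      unfold phiLetterH phiLetter
      by_cases hi : i = 0
      · rw [if_pos hi, if_pos hi, evalS_lconcatH, IH]
      · rw [if_neg hi, if_neg hi]
        have hsh : (fun v => evalS d (shuffleFnH (fun ν => aw ν) (phiH ξ e) v))
            = sh d (phi d ξ (fun v => evalS d (e v))) := by
          funext v
          rw [evalS_shuffleFnH]
          show shuffleFn _ _ v = shuffleFn d _ v
          rw [show (fun ν => evalS d (aw ν)) = d from funext fun ν => evalS_aw d ν, IH]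
        rw [map_add, evalS_lconcatH, evalS_lconcatH, IH, hsh]
        rfl

lemma evalS_Q (d : Series) (ξ η : Word) : evalS d (Q ξ η) = phi d ξ one η := by
  rw [Q, evalS_phiH]
  congr 1
  funext w
  simp only [oneH, one, ind]
  split <;> simp

/-! ### Separation of points of `H ⊗ H` by pairs of characters -/

lemma evalPair_tmul (c d : Series) (p q : H) :
    evalPair c d (p ⊗ₜ[ℝ] q) = evalS c p * evalS d q := rfl

lemma evalS_eq_eval (d : Series) (h : H) : evalS d h = MvPolynomial.eval d h := rfl

lemma evalS_zero_of_forall {h : H} (hh : ∀ d : Series, evalS d h = 0) : h = 0 := by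
  apply MvPolynomial.funext (q := 0)
  intro x
  rw [map_zero, ← evalS_eq_eval]
  exact hh x

lemma sep {T : H ⊗[ℝ] H} (h : ∀ c d : Series, evalPair c d T = 0) : T = 0 := by
  set ι := MvPolynomial.algebraTensorAlgEquiv (σ := Word) ℝ H with hι
  have key : ∀ (U : H ⊗[ℝ] H) (c d : Series),
      evalPair c d U
        = MvPolynomial.eval d (MvPolynomial.map (evalS c).toRingHom (ι U)) := by
    intro U c d
    induction U using TensorProduct.induction_on with
    | zero => simp
    | tmul p q =>
        rw [evalPair_tmul, MvPolynomial.algebraTensorAlgEquiv_tmul,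
          MvPolynomial.smul_eq_C_mul, map_mul, MvPolynomial.map_C,
          MvPolynomial.map_map]
        have hcomp : (evalS c).toRingHom.comp (algebraMap ℝ H) = RingHom.id ℝ := by
          ext r
          simp [evalS]
        rw [hcomp, MvPolynomial.map_id, map_mul, MvPolynomial.eval_C, evalS_eq_eval]
        rfl
    | add x y hx hy =>
        rw [map_add, hx, hy, show ι (x + y) = ι x + ι y from map_add (f := ι.toAlgHom) x y,
          map_add, map_add]
  have hzero : ι T = 0 := by
    apply MvPolynomial.ext
    intro α
    rw [MvPolynomial.coeff_zero]
    apply evalS_zero_of_forall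
    intro cc
    have h2 : ∀ d : Series, MvPolynomial.eval d
        (MvPolynomial.map (evalS cc).toRingHom (ι T)) = 0 := by
      intro d
      rw [← key T cc d]
      exact h cc d
    have h3 : MvPolynomial.map (evalS cc).toRingHom (ι T) = 0 := by
      apply MvPolynomial.funext (q := 0)
      intro x
      rw [map_zero]
      exact h2 x
    have := congrArg (MvPolynomial.coeff α) h3
    rwa [MvPolynomial.coeff_map, MvPolynomial.coeff_zero] at this
  exact ι.injective (by rw [hzero, map_zero])

/-! ### Structure of the coproduct and the antipode equation -/

lemma Delta_aw {Δ : H →ₐ[ℝ] H ⊗[ℝ] H} (hΔ : IsFBCoproduct Δ) (η : Word) :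
    Δ (aw η) = (∑ ξ ∈ Wle η.length, aw ξ ⊗ₜ[ℝ] Q ξ η) + (1 : H) ⊗ₜ[ℝ] aw η := by
  have h : ∀ cc d : Series, evalPair cc d (Δ (aw η)
      - ((∑ ξ ∈ Wle η.length, aw ξ ⊗ₜ[ℝ] Q ξ η) + (1 : H) ⊗ₜ[ℝ] aw η)) = 0 := by
    intro cc d
    rw [map_sub, map_add, map_sum, hΔ η cc d, mcomp_eq_sum]
    have h1 : ∀ ξ ∈ Wle η.length,
        evalPair cc d (aw ξ ⊗ₜ[ℝ] Q ξ η) = cc ξ * phi d ξ one η := by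
      intro ξ _
      rw [evalPair_tmul, evalS_aw, evalS_Q]
    rw [Finset.sum_congr rfl h1, evalPair_tmul, map_one, evalS_aw, one_mul]
    ring
  have := sep (h := fun cc d => h cc d)
  rw [sub_eq_zero] at this
  exact this

lemma S_one {Δ : H →ₐ[ℝ] H ⊗[ℝ] H} {S : H →ₗ[ℝ] H} (hS : IsAntipode Δ S) :
    S (1 : H) = 1 := by
  have h := hS.1 1
  rw [map_one, Algebra.TensorProduct.one_def] at h
  simpa [TensorProduct.map_tmul, LinearMap.mul'_apply] using h

lemma counit_aw (η : Word) : counit (aw η) = 0 := by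
  simp [counit, evalS, aw]

lemma antipode_eq {Δ : H →ₐ[ℝ] H ⊗[ℝ] H} (hΔ : IsFBCoproduct Δ)
    {S : H →ₗ[ℝ] H} (hS : IsAntipode Δ S) (c : Series) (η : Word) :
    (∑ ξ ∈ Wle η.length, evalS c (S (aw ξ)) * phi c ξ one η) + c η = 0 := by
  have h := hS.1 (aw η)
  rw [Delta_aw hΔ η, map_add, map_sum, map_add, map_sum] at h
  simp only [TensorProduct.map_tmul, LinearMap.id_coe, id_eq,
    LinearMap.mul'_apply, counit_aw, zero_smul, S_one hS, one_mul] at h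
  have := congrArg (evalS c) h
  rw [map_add, map_sum, map_zero] at this
  simp only [map_mul, evalS_Q, evalS_aw] at this
  exact this

/-! ### Uniqueness of solutions of the triangular system -/

lemma uniq (c : Series) (g : Word → ℝ)
    (hg : ∀ η : Word, (∑ ξ ∈ Wle η.length, g ξ * phi c ξ one η) = 0) (η : Word) :
    g η = 0 := by
  suffices h : ∀ n, ∀ η : Word, η.length < n → g η = 0 from
    h (η.length + 1) η (by omega)
  intro n
  induction n with
  | zero => exact fun η h => absurd h (by omega)
  | succ n Hn =>
      suffices h2 : ∀ k, ∀ η : Word, η.length = n → η.count 0 < k → g η = 0 by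
        intro η hη
        rcases Nat.lt_or_ge η.length n with h | h
        · exact Hn η h
        · exact h2 (η.count 0 + 1) η (by omega) (by omega)
      intro k
      induction k with
      | zero => exact fun η _ h => absurd h (by omega)
      | succ k Hk =>
          intro η hlen hcnt
          have h := hg η
          rw [Finset.sum_eq_single_of_mem η (mem_Wle.mpr le_rfl) ?other] at h
          · rwa [phi_diag_self, mul_one] at h
          case other =>
            intro ξ hξ hne
            by_cases hz : phi c ξ one η = 0
            · rw [hz, mul_zero]
            · have hl := mem_Wle.mp hξ
              rcases Nat.lt_or_ge ξ.length η.length with hlt | hge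
              · rw [Hn ξ (by omega), zero_mul]
              · have hle : ξ.length = η.length := le_antisymm hl hge
                have hcount := phi_diag_lt c ξ η hle hne hz
                rw [Hk ξ (by omega) (by omega), zero_mul]

end Paper

open Paper in
/-- For every `c ∈ ℝ⟨⟨X⟩⟩` and every word `η ∈ X*`, the group inverse
`c_δ^{∘−1} = δ + c^{∘−1}` of `c_δ = δ + c` in the output feedback group satisfies
`⟨c^{∘−1}, η⟩ = S a_η (c)`, where `S` is the antipode of the output feedback Hopf
algebra `H` and `S a_η (c)` is the pointwise (character) evaluation at `c`. -/
theorem group_inverse_eq_antipode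
    (Δ : H →ₐ[ℝ] (H ⊗[ℝ] H)) (hΔ : IsFBCoproduct Δ)
    (S : H →ₗ[ℝ] H) (hS : IsAntipode Δ S)
    (c ci : Series) (hinv : gop c ci = 0 ∧ gop ci c = 0) :
    ∀ η : Word, ci η = evalS c (S (aw η)) := by
  have hfb : ∀ μ : Word, (∑ ξ ∈ Wle μ.length, ci ξ * phi c ξ one μ) + c μ = 0 := by
    intro μ
    have h := congrFun hinv.2 μ
    rw [gop] at h
    simp only [Pi.add_apply, Pi.zero_apply] at h
    rw [mcomp_eq_sum] at h
    linarith
  have hanti := antipode_eq hΔ hS c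
  have key : ∀ μ : Word, ci μ - evalS c (S (aw μ)) = 0 := by
    apply uniq c
    intro μ
    have h1 := hfb μ
    have h2 := hanti μ
    simp only [sub_mul]
    rw [Finset.sum_sub_distrib]
    linarith
  intro η
  have := key η
  linarith
end
end

section
/- For any c, d ∈ ℝ⟨⟨X⟩⟩, the series e := c ∘̃ ((−d) ∘ c)^{∘−1} satisfies the feedback fixed point equation e = c ∘̃ (d ∘ e); that is, the feedback product c @ d, characterized as the unique solution of that fixed point equation, equals c ∘̃ ((−d) ∘ c)^{∘−1}. -/
open scoped TensorProduct

noncomputable section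

/-!
Both products are sums `Σ_η ⟨c,η⟩ op(η)` of operators that vanish on words shorter than `η`,
so on each word they are finite sums, and stripping the first letter gives the recursions
`x₁⁻¹(c ∘̃ e) = x₁⁻¹c ∘̃ e`, `x₀⁻¹(c ∘̃ e) = x₀⁻¹c ∘̃ e + e ⧢ (x₁⁻¹c ∘̃ e)` and
`x₁⁻¹(d ∘ c) = 0`, `x₀⁻¹(d ∘ c) = x₀⁻¹d ∘ c + c ⧢ (x₁⁻¹d ∘ c)`.
Induction on word length along these recursions shows that `· ∘̃ e` is a shuffle homomorphism,
hence the mixed associativity `d ∘ (c ∘̃ e) = (d ∘ c) ∘̃ e`, and that `c ∘̃ ·` is a contraction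
for the ultrametric, so `w = c ∘̃ w` has at most one solution.
The inverse `i` of `(-d) ∘ c` satisfies `i = (d ∘ c) ∘̃ i`. By mixed associativity
`d ∘ (c ∘̃ i) = i`, which is the feedback equation for `c ∘̃ i`; and for any solution `e` of the
feedback equation, `d ∘ e` is a fixed point of `(d ∘ c) ∘̃ ·`, hence equal to `i`.
-/

namespace Paper

lemma lshift_apply (i : Fin 2) (c : Series) (w : Word) : lshift i c w = c (i :: w) := rfl

@[simp] lemma lshift_add (i : Fin 2) (c d : Series) :
    lshift i (c + d) = lshift i c + lshift i d := rfl

lemma lshift_lconcat (i j : Fin 2) (c : Series) :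
    lshift j (lconcat i c) = if j = i then c else 0 := by
  funext w
  by_cases h : j = i <;> simp [lshift, lconcat, h]

@[simp] lemma lconcat_zero (i : Fin 2) : lconcat i (0 : Series) = 0 := by
  funext w
  cases w <;> simp [lconcat]

@[simp] lemma lshift_one (i : Fin 2) : lshift i one = 0 := by
  funext w
  simp [lshift, one, ind]

lemma sh_nil (c d : Series) : sh c d [] = c [] * d [] := rfl

lemma lshift_sh (i : Fin 2) (c d : Series) :
    lshift i (sh c d) = sh (lshift i c) d + sh c (lshift i d) := rfl

lemma sh_comm (c d : Series) : sh c d = sh d c := by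
  funext w
  induction w generalizing c d with
  | nil => exact mul_comm _ _
  | cons i w ih =>
    change sh (lshift i c) d w + sh c (lshift i d) w = sh (lshift i d) c w + sh d (lshift i c) w
    rw [ih, ih c, add_comm]

lemma sh_add_left (c c' d : Series) : sh (c + c') d = sh c d + sh c' d := by
  funext w
  induction w generalizing c c' d with
  | nil => exact add_mul _ _ _
  | cons i w ih =>
    change lshift i (sh (c + c') d) w = lshift i (sh c d) w + lshift i (sh c' d) w
    simp only [lshift_sh, lshift_add, Pi.add_apply, ih]
    ring

lemma sh_smul_left (r : ℝ) (c d : Series) : sh (r • c) d = r • sh c d := by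
  funext w
  induction w generalizing c d with
  | nil => exact mul_assoc _ _ _
  | cons i w ih =>
    change sh (r • lshift i c) d w + sh (r • c) (lshift i d) w
      = r * (sh (lshift i c) d w + sh c (lshift i d) w)
    simp only [ih, Pi.smul_apply, smul_eq_mul]
    ring

def shuffle : Series →ₗ[ℝ] Series →ₗ[ℝ] Series :=
  LinearMap.mk₂ ℝ sh sh_add_left sh_smul_left
    (fun c d d' => by rw [sh_comm, sh_add_left, sh_comm d, sh_comm d'])
    (fun r c d => by rw [sh_comm, sh_smul_left, sh_comm])

lemma shuffle_apply (c d : Series) : shuffle c d = sh c d := rfl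

lemma sh_add_right (c d d' : Series) : sh c (d + d') = sh c d + sh c d' :=
  (shuffle c).map_add d d'

@[simp] lemma sh_zero_right (c : Series) : sh c 0 = 0 := (shuffle c).map_zero

lemma sh_assoc (c d e : Series) : sh (sh c d) e = sh c (sh d e) := by
  funext w
  induction w generalizing c d e with
  | nil => exact mul_assoc _ _ _
  | cons i w ih =>
    change lshift i (sh (sh c d) e) w = lshift i (sh c (sh d e)) w
    simp only [lshift_sh, sh_add_left, sh_add_right, Pi.add_apply, ih]
    ring

lemma sh_left_comm (c d e : Series) : sh c (sh d e) = sh d (sh c e) := by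
  rw [← sh_assoc, sh_comm c d, sh_assoc]

def EqBelow (n : ℕ) (c d : Series) : Prop := ∀ w : Word, w.length < n → c w = d w

lemma eqBelow_zero (c d : Series) : EqBelow 0 c d := fun _ h => absurd h (Nat.not_lt_zero _)

lemma eqBelow_succ_iff {n : ℕ} {c d : Series} :
    EqBelow (n + 1) c d ↔ c [] = d [] ∧ ∀ i, EqBelow n (lshift i c) (lshift i d) := by
  refine ⟨fun h => ⟨h [] (Nat.succ_pos n), fun i w hw => h (i :: w) (by simpa using hw)⟩, ?_⟩
  rintro ⟨hnil, hcons⟩ (_ | ⟨i, w⟩) hw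
  · exact hnil
  · exact hcons i w (by simpa using hw)

namespace EqBelow

variable {n : ℕ} {c c' d d' : Series}

lemma of_lshift (hnil : c [] = d []) (h0 : EqBelow n (lshift 0 c) (lshift 0 d))
    (h1 : EqBelow n (lshift 1 c) (lshift 1 d)) : EqBelow (n + 1) c d :=
  eqBelow_succ_iff.mpr ⟨hnil, Fin.forall_fin_two.mpr ⟨h0, h1⟩⟩

lemma refl (n : ℕ) (c : Series) : EqBelow n c c := fun _ _ => rfl

lemma mono {m : ℕ} (h : EqBelow n c d) (hmn : m ≤ n) : EqBelow m c d :=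
  fun w hw => h w (hw.trans_le hmn)

lemma add (hc : EqBelow n c c') (hd : EqBelow n d d') : EqBelow n (c + d) (c' + d') :=
  fun w hw => congrArg₂ (· + ·) (hc w hw) (hd w hw)

lemma sh (hc : EqBelow n c c') (hd : EqBelow n d d') : EqBelow n (sh c d) (sh c' d') := by
  induction n generalizing c c' d d' with
  | zero => exact eqBelow_zero _ _
  | succ n ih =>
    refine eqBelow_succ_iff.mpr ⟨by rw [sh_nil, sh_nil, hc [] n.succ_pos, hd [] n.succ_pos],
      fun i => ?_⟩
    rw [lshift_sh, lshift_sh]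
    exact (ih ((eqBelow_succ_iff.mp hc).2 i) (hd.mono n.le_succ)).add
      (ih (hc.mono n.le_succ) ((eqBelow_succ_iff.mp hd).2 i))

lemma lconcat (h : EqBelow n c d) (i : Fin 2) :
    EqBelow (n + 1) (lconcat i c) (lconcat i d) := by
  refine eqBelow_succ_iff.mpr ⟨rfl, fun j => ?_⟩
  rw [lshift_lconcat, lshift_lconcat]
  split_ifs
  exacts [h, refl _ _]

lemma phiLetter (h : EqBelow n c d) (e : Series) (i : Fin 2) :
    EqBelow (n + 1) (phiLetter e i c) (phiLetter e i d) := by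
  unfold Paper.phiLetter
  split_ifs
  exacts [h.lconcat 0, (h.lconcat 1).add (((refl n e).sh h).lconcat 0)]

lemma psiLetter (h : EqBelow n c d) (e : Series) (i : Fin 2) :
    EqBelow (n + 1) (psiLetter e i c) (psiLetter e i d) := by
  unfold Paper.psiLetter
  split_ifs
  exacts [h.lconcat 0, ((refl n e).sh h).lconcat 0]

end EqBelow

lemma eq_of_forall_eqBelow {c d : Series} (h : ∀ n, EqBelow n c d) : c = d :=
  funext fun w => h (w.length + 1) w (Nat.lt_succ_self _)

def VanishesBelowLength (op : Word → Series) : Prop := ∀ η, EqBelow η.length (op η) 0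

lemma vanishesBelowLength_phi (e f : Series) : VanishesBelowLength (fun η => phi e η f) := by
  intro η
  induction η with
  | nil => exact eqBelow_zero _ _
  | cons i η ih => simpa [phi, phiLetter] using ih.phiLetter e i

lemma vanishesBelowLength_psi (e f : Series) : VanishesBelowLength (fun η => psi e η f) := by
  intro η
  induction η with
  | nil => exact eqBelow_zero _ _
  | cons i η ih => simpa [psi, psiLetter] using ih.psiLetter e i

def wordsUpTo : ℕ → Finset Word
  | 0 => {[]}
  | n + 1 => insert [] ((Finset.univ ×ˢ wordsUpTo n).image fun p => p.1 :: p.2)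

lemma mem_wordsUpTo {n : ℕ} {η : Word} : η ∈ wordsUpTo n ↔ η.length ≤ n := by
  induction n generalizing η with
  | zero => simp [wordsUpTo]
  | succ n ih => cases η <;> simp [wordsUpTo, ih]

lemma sum_wordsUpTo_succ {M : Type*} [AddCommMonoid M] (n : ℕ) (F : Word → M) :
    ∑ η ∈ wordsUpTo (n + 1), F η = F [] + ∑ i, ∑ μ ∈ wordsUpTo n, F (i :: μ) := by
  rw [wordsUpTo, Finset.sum_insert (by simp), Finset.sum_image (by simp), Finset.sum_product]

def linComb (c : Series) (op : Word → Series) : Series := fun w => ∑' η, c η * op η w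

lemma linComb_zero_left (op : Word → Series) : linComb 0 op = 0 := by
  funext w
  simp [linComb]

lemma linComb_zero_right (c : Series) : linComb c (fun _ => 0) = 0 := by
  funext w
  simp [linComb]

namespace VanishesBelowLength

variable {op : Word → Series} (hop : VanishesBelowLength op)
include hop

lemma linComb_apply_eq_sum (c : Series) {w : Word} {n : ℕ} (hw : w.length ≤ n) :
    linComb c op w = ∑ η ∈ wordsUpTo n, c η * op η w := by
  refine tsum_eq_sum fun η hη => ?_
  rw [hop η w (by rw [mem_wordsUpTo] at hη; omega), Pi.zero_apply, mul_zero]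

lemma linComb_apply_nil (c : Series) : linComb c op [] = c [] * op [] [] := by
  simp [hop.linComb_apply_eq_sum c (w := []) (n := 0) le_rfl, wordsUpTo]

lemma linComb_add_left (c d : Series) : linComb (c + d) op = linComb c op + linComb d op := by
  funext w
  simp only [Pi.add_apply, hop.linComb_apply_eq_sum _ le_rfl, add_mul, Finset.sum_add_distrib]

lemma linComb_neg_left (c : Series) : linComb (-c) op = -linComb c op := by
  funext w
  simp only [Pi.neg_apply, hop.linComb_apply_eq_sum _ le_rfl, neg_mul, Finset.sum_neg_distrib]

lemma lshift_linComb (c : Series) (j : Fin 2) :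
    lshift j (linComb c op) =
      c [] • lshift j (op []) + ∑ i, linComb (lshift i c) (fun μ => lshift j (op (i :: μ))) := by
  have hop' (i : Fin 2) : VanishesBelowLength fun μ => lshift j (op (i :: μ)) :=
    fun μ => (eqBelow_succ_iff.mp (hop (i :: μ))).2 j
  funext v
  simp only [lshift_apply, hop.linComb_apply_eq_sum c (Nat.le_refl (j :: v).length),
    List.length_cons, sum_wordsUpTo_succ, Pi.add_apply, Pi.smul_apply, smul_eq_mul,
    Finset.sum_apply, (hop' _).linComb_apply_eq_sum _ le_rfl]

lemma sh_linComb (e c : Series) : sh e (linComb c op) = linComb c (fun η => sh e (op η)) := by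
  have hop' : VanishesBelowLength fun η => sh e (op η) :=
    fun η => by simpa using (EqBelow.refl _ e).sh (hop η)
  funext v
  have htrunc : EqBelow (v.length + 1) (linComb c op) (∑ η ∈ wordsUpTo v.length, c η • op η) :=
    fun w hw => by simp [hop.linComb_apply_eq_sum c (Nat.lt_succ_iff.mp hw), Finset.sum_apply]
  rw [(EqBelow.refl _ e).sh htrunc v (Nat.lt_succ_self _), ← shuffle_apply, map_sum,
    hop'.linComb_apply_eq_sum c le_rfl, Finset.sum_apply]
  simp [shuffle_apply]

end VanishesBelowLength

lemma mcomp_eq_linComb (c e : Series) : mcomp c e = linComb c (fun η => phi e η one) := rfl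

lemma comp_eq_linComb (c e : Series) : comp c e = linComb c (fun η => psi e η one) := rfl

@[simp] lemma mcomp_apply_nil (c e : Series) : mcomp c e [] = c [] := by
  rw [mcomp_eq_linComb, (vanishesBelowLength_phi e one).linComb_apply_nil]
  simp [phi, one, ind]

lemma lshift_x1_mcomp (c e : Series) : lshift 1 (mcomp c e) = mcomp (lshift 1 c) e := by
  simp [mcomp_eq_linComb, (vanishesBelowLength_phi e one).lshift_linComb, Fin.sum_univ_two,
    phi, phiLetter, lshift_lconcat, linComb_zero_right]

lemma lshift_x0_mcomp (c e : Series) :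
    lshift 0 (mcomp c e) = mcomp (lshift 0 c) e + sh e (mcomp (lshift 1 c) e) := by
  simp [mcomp_eq_linComb, (vanishesBelowLength_phi e one).lshift_linComb, Fin.sum_univ_two,
    phi, phiLetter, lshift_lconcat, (vanishesBelowLength_phi e one).sh_linComb]

@[simp] lemma comp_apply_nil (c e : Series) : comp c e [] = c [] := by
  rw [comp_eq_linComb, (vanishesBelowLength_psi e one).linComb_apply_nil]
  simp [psi, one, ind]

lemma lshift_x1_comp (c e : Series) : lshift 1 (comp c e) = 0 := by
  simp [comp_eq_linComb, (vanishesBelowLength_psi e one).lshift_linComb, Fin.sum_univ_two,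
    psi, psiLetter, lshift_lconcat, linComb_zero_right]

lemma lshift_x0_comp (c e : Series) :
    lshift 0 (comp c e) = comp (lshift 0 c) e + sh e (comp (lshift 1 c) e) := by
  simp [comp_eq_linComb, (vanishesBelowLength_psi e one).lshift_linComb, Fin.sum_univ_two,
    psi, psiLetter, lshift_lconcat, (vanishesBelowLength_psi e one).sh_linComb]

lemma mcomp_add_left (c c' e : Series) : mcomp (c + c') e = mcomp c e + mcomp c' e :=
  (vanishesBelowLength_phi e one).linComb_add_left c c'

lemma mcomp_neg_left (c e : Series) : mcomp (-c) e = -mcomp c e :=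
  (vanishesBelowLength_phi e one).linComb_neg_left c

@[simp] lemma mcomp_zero_left (e : Series) : mcomp 0 e = 0 := linComb_zero_left _

lemma comp_neg_left (c e : Series) : comp (-c) e = -comp c e :=
  (vanishesBelowLength_psi e one).linComb_neg_left c

lemma mcomp_sh (c d e : Series) : mcomp (sh c d) e = sh (mcomp c e) (mcomp d e) := by
  refine eq_of_forall_eqBelow fun n => ?_
  induction n generalizing c d with
  | zero => exact eqBelow_zero _ _
  | succ n ih =>
    refine .of_lshift (by simp [sh_nil]) ?_ ?_
    -- both `x₀`-shifts reduce to `A₀ ⧢ B + A ⧢ B₀ + e ⧢ (A₁ ⧢ B + A ⧢ B₁)`,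
    -- where `A = c ∘̃ e`, `Aᵢ = xᵢ⁻¹c ∘̃ e`, and likewise for `B`
    · have h := ((ih (lshift 0 c) d).add (ih c (lshift 0 d))).add
        ((EqBelow.refl n e).sh ((ih (lshift 1 c) d).add (ih c (lshift 1 d))))
      simp only [lshift_x0_mcomp, lshift_sh, mcomp_add_left, sh_add_left, sh_add_right,
        sh_assoc, sh_left_comm (mcomp c e) e] at h ⊢
      convert h using 1
      abel
    · simpa only [lshift_x1_mcomp, lshift_sh, mcomp_add_left]
        using (ih (lshift 1 c) d).add (ih c (lshift 1 d))

lemma EqBelow.mcomp_right {n : ℕ} {e e' : Series} (h : EqBelow n e e') (c : Series) :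
    EqBelow (n + 1) (mcomp c e) (mcomp c e') := by
  induction n generalizing c with
  | zero => exact .of_lshift (by simp) (eqBelow_zero _ _) (eqBelow_zero _ _)
  | succ n ih =>
    have ih' := ih (h.mono n.le_succ)
    refine .of_lshift (by simp) ?_ ?_
    · simpa only [lshift_x0_mcomp] using (ih' (lshift 0 c)).add (h.sh (ih' (lshift 1 c)))
    · simpa only [lshift_x1_mcomp] using ih' (lshift 1 c)

lemma eq_of_mcomp_fixed {c e e' : Series} (he : e = mcomp c e) (he' : e' = mcomp c e') :
    e = e' := by
  refine eq_of_forall_eqBelow fun n => ?_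
  induction n with
  | zero => exact eqBelow_zero _ _
  | succ n ih => rw [he, he']; exact ih.mcomp_right c

lemma comp_mcomp_assoc (d c e : Series) : comp d (mcomp c e) = mcomp (comp d c) e := by
  refine eq_of_forall_eqBelow fun n => ?_
  induction n generalizing d with
  | zero => exact eqBelow_zero _ _
  | succ n ih =>
    refine .of_lshift (by simp) ?_ ?_
    · simpa only [lshift_x0_comp, lshift_x0_mcomp, lshift_x1_comp, mcomp_add_left, mcomp_sh,
        mcomp_zero_left, sh_zero_right, add_zero]
        using (ih (lshift 0 d)).add ((EqBelow.refl n _).sh (ih (lshift 1 d)))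
    · simpa only [lshift_x1_comp, lshift_x1_mcomp, mcomp_zero_left] using EqBelow.refl n 0

end Paper

open Paper in
/-- For any `c, d ∈ ℝ⟨⟨X⟩⟩`, the series `e := c ∘̃ ((−d) ∘ c)^{∘−1}`
satisfies the feedback fixed point equation `e = c ∘̃ (d ∘ e)`; that is, the feedback
product `c @ d`, characterized as the unique solution of that fixed point equation,
equals `c ∘̃ ((−d) ∘ c)^{∘−1}`.  Here `i` denotes `((−d) ∘ c)^{∘−1}`, the group inverse
of `(−d) ∘ c` in the output feedback group. -/
theorem feedback_product_formula (c d i : Series)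
    (hinv : gop (comp (-d) c) i = 0 ∧ gop i (comp (-d) c) = 0) :
    mcomp c i = mcomp c (comp d (mcomp c i)) ∧
    (∀ e : Series, e = mcomp c (comp d e) → e = mcomp c i) := by
  have hi : i = mcomp (comp d c) i := by
    have h := hinv.1
    rwa [gop, comp_neg_left, mcomp_neg_left, ← sub_eq_add_neg, sub_eq_zero] at h
  have hfix : comp d (mcomp c i) = i := by rw [comp_mcomp_assoc, ← hi]
  refine ⟨by rw [hfix], fun e he => ?_⟩
  have hde : comp d e = mcomp (comp d c) (comp d e) := by
    conv_lhs => rw [he, comp_mcomp_assoc]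
  rw [he, eq_of_mcomp_fixed hde hi]
end
end
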